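/- arXiv:1910.03303 — 10 statements merged into one kernel-verified Lean document; each statement's English description precedes it below -/
import Mathlib

section
/- Let T > 0 and let F : [0,T] × (0,∞) → ℝ be continuous, such that for each t the map x ↦ F(t,x) is nondecreasing and continuously differentiable, with ∂ₓF bounded on [0,T] × [ε,∞) for every ε > 0. Let U, V : [0,T] → ℝ be continuous with U(0) > 0 and U(0) ≤ V(0). For δ ≥ 0 let t_U^δ be the first time in [0,T] at which U equals δ (set t_U^δ = T if U never equals δ), and define t_V^δ analogously. Suppose U(t) ≤ U(0) + ∫₀ᵗ F(r,U(r)) dr for all t < t_U^0 and V(t) = V(0) + ∫₀ᵗ F(r,V(r)) dr for all t < t_V^0. Then for every δ ∈ (0, U(0)): U(t) ≤ V(t) for all t < min(t_U^δ, t_V^δ), and consequently t_U^δ ≤ t_V^δ. -/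
/-!
Before the first time they hit `δ`, both `U` and `V` stay in `(δ, ∞)`, where monotonicity of
`F(t, ·)` and the bound on `∂ₓF` give the one-sided Lipschitz estimate
`F(t,x) - F(t,y) ≤ B (x - y)⁺`. Hence `w = (U - V)⁺` satisfies `w(t) ≤ B ∫₀ᵗ w`, and Grönwall's
inequality forces `w = 0`; the integral relations are available there because `U` and `V` hit `δ`
no later than `0`. If `V` reached `δ` strictly before `U`, then at that time `U ≤ V = δ`
by continuity, so `U` would already have hit `δ`.
-/

open Set MeasureTheory intervalIntegral

/-- The `{T}` makes the infimum `T` when `f` never takes the value `δ` on `[0, T]`, instead of the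
junk value `sInf ∅ = 0`. -/
noncomputable def firstHitTime (T : ℝ) (f : ℝ → ℝ) (δ : ℝ) : ℝ :=
  sInf ({s | s ∈ Icc (0 : ℝ) T ∧ f s = δ} ∪ {T})

section firstHitTime

variable {T δ t : ℝ} {f : ℝ → ℝ}

lemma bddBelow_firstHitSet : BddBelow ({s | s ∈ Icc (0 : ℝ) T ∧ f s = δ} ∪ {T}) :=
  (bddBelow_Icc.mono fun _ hs => hs.1).union bddBelow_singleton

lemma firstHitTime_le_right : firstHitTime T f δ ≤ T :=
  csInf_le bddBelow_firstHitSet (Or.inr rfl)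

lemma firstHitTime_le_of_apply_eq (ht : t ∈ Icc 0 T) (hft : f t = δ) :
    firstHitTime T f δ ≤ t :=
  csInf_le bddBelow_firstHitSet (Or.inl ⟨ht, hft⟩)

lemma apply_firstHitTime_of_lt (hf : ContinuousOn f (Icc 0 T)) (hlt : firstHitTime T f δ < T) :
    firstHitTime T f δ ∈ Icc 0 T ∧ f (firstHitTime T f δ) = δ := by
  have hclosed : IsClosed ({s | s ∈ Icc (0 : ℝ) T ∧ f s = δ} ∪ {T}) :=
    (hf.preimage_isClosed_of_isClosed isClosed_Icc isClosed_singleton).union isClosed_singleton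
  rcases hclosed.csInf_mem ⟨T, Or.inr rfl⟩ bddBelow_firstHitSet with h | h
  · exact h
  · exact absurd h hlt.ne

lemma firstHitTime_le_of_apply_le (hf : ContinuousOn f (Icc 0 T)) (h0 : δ ≤ f 0)
    (ht : t ∈ Icc 0 T) (hft : f t ≤ δ) : firstHitTime T f δ ≤ t := by
  obtain ⟨s, hs, hfs⟩ :=
    intermediate_value_Icc' ht.1 (hf.mono (Icc_subset_Icc_right ht.2)) ⟨hft, h0⟩
  exact (firstHitTime_le_of_apply_eq ⟨hs.1, hs.2.trans ht.2⟩ hfs).trans hs.2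

lemma mapsTo_Ioi_of_lt_firstHitTime {s : ℝ} (hf : ContinuousOn f (Icc 0 T)) (h0 : δ ≤ f 0)
    (hsT : s ≤ T) (hs : s < firstHitTime T f δ) : MapsTo f (Icc 0 s) (Ioi δ) := fun _ ht =>
  lt_of_not_ge fun hft =>
    ((firstHitTime_le_of_apply_le hf h0 ⟨ht.1, ht.2.trans hsT⟩ hft).trans ht.2).not_gt hs

lemma firstHitTime_le_firstHitTime (hf : ContinuousOn f (Icc 0 T)) {δ' : ℝ} (hδ : δ' ≤ δ)
    (h0 : δ ≤ f 0) : firstHitTime T f δ ≤ firstHitTime T f δ' := by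
  refine le_csInf ⟨T, Or.inr rfl⟩ ?_
  rintro s (⟨hs, hfs⟩ | rfl)
  · exact firstHitTime_le_of_apply_le hf h0 hs (hfs ▸ hδ)
  · exact firstHitTime_le_right

lemma firstHitTime_le_firstHitTime_of_le {g : ℝ → ℝ} (hf : ContinuousOn f (Icc 0 T))
    (hg : ContinuousOn g (Icc 0 T)) (h0 : δ ≤ f 0) (hfg0 : f 0 ≤ g 0)
    (hfg : ∀ t ∈ Icc 0 T, t < min (firstHitTime T f δ) (firstHitTime T g δ) → f t ≤ g t) :
    firstHitTime T f δ ≤ firstHitTime T g δ := by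
  by_contra! hlt
  obtain ⟨hτ, hgτ⟩ := apply_firstHitTime_of_lt hg (hlt.trans_le firstHitTime_le_right)
  set τ := firstHitTime T g δ
  have hfgτ : f τ ≤ g τ := by
    rcases hτ.1.eq_or_lt with hτ0 | hτ0
    · rw [← hτ0]
      exact hfg0
    · have hsub : Ico 0 τ ⊆ Icc 0 T := fun s hs => ⟨hs.1, hs.2.le.trans hτ.2⟩
      refine ContinuousWithinAt.closure_le (s := Ico 0 τ) ?_ ((hf τ hτ).mono hsub)
        ((hg τ hτ).mono hsub) fun s hs => hfg s (hsub hs) ?_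
      · rw [closure_Ico hτ0.ne]
        exact right_mem_Icc.2 hτ0.le
      · rw [min_eq_right hlt.le]
        exact hs.2
  exact hlt.not_ge (firstHitTime_le_of_apply_le hf h0 hτ (hfgτ.trans hgτ.le))

end firstHitTime

lemma sub_le_mul_max_sub_zero_of_monotoneOn {φ φ' : ℝ → ℝ} {S : Set ℝ} {B x y : ℝ}
    (hS : Convex ℝ S) (hmono : MonotoneOn φ S) (hderiv : ∀ z ∈ S, HasDerivWithinAt φ (φ' z) S z)
    (hbdd : ∀ z ∈ S, |φ' z| ≤ B) (hx : x ∈ S) (hy : y ∈ S) :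
    φ x - φ y ≤ B * max (x - y) 0 := by
  rcases le_total x y with hxy | hyx
  · rw [max_eq_right (sub_nonpos.2 hxy), mul_zero]
    exact sub_nonpos.2 (hmono hx hy hxy)
  · have hlip := hS.norm_image_sub_le_of_norm_hasDerivWithin_le hderiv hbdd hy hx
    rw [Real.norm_eq_abs, Real.norm_eq_abs, abs_of_nonneg (sub_nonneg.2 hyx)] at hlip
    rw [max_eq_left (sub_nonneg.2 hyx)]
    exact (le_abs_self _).trans hlip

theorem le_zero_of_le_mul_integral {g : ℝ → ℝ} {K a b : ℝ} (hK : 0 ≤ K)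
    (hg : ContinuousOn g (Icc a b)) (hle : ∀ t ∈ Icc a b, g t ≤ K * ∫ r in a..t, g r) :
    ∀ t ∈ Icc a b, g t ≤ 0 := by
  set G := fun t => ∫ r in a..t, g r
  have hG : ∀ x ∈ Icc a b, HasDerivWithinAt G (g x) (Icc a b) x := fun x hx => by
    have := Fact.mk hx
    exact integral_hasDerivWithinAt_right
      ((hg.mono (Icc_subset_Icc_right hx.2)).intervalIntegrable_of_Icc hx.1)
      (hg.stronglyMeasurableAtFilter_nhdsWithin measurableSet_Icc x) (hg x hx)
  have hG0 : ∀ x ∈ Icc a b, G x ≤ 0 := by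
    intro x hx
    simpa only [gronwallBound_ε0_δ0] using
      le_gronwallBound_of_liminf_deriv_right_le (δ := 0) (ε := 0)
        (fun x hx => (hG x hx).continuousWithinAt)
        (fun x hx r hr => ((hG x (Ico_subset_Icc_self hx)).mono_of_mem_nhdsWithin
          (Icc_mem_nhdsGE_of_mem hx)).liminf_right_slope_le hr)
        (by simp [G]) (fun x hx => by simpa using hle x (Ico_subset_Icc_self hx)) x hx
  exact fun t ht => (hle t ht).trans (mul_nonpos_of_nonneg_of_nonpos hK (hG0 t ht))

theorem le_of_integral_subsolution_of_supersolution {F : ℝ → ℝ → ℝ} {S : Set ℝ} {u v : ℝ → ℝ}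
    {a b K : ℝ} (hK : 0 ≤ K) (hF : ContinuousOn (fun p : ℝ × ℝ => F p.1 p.2) (Icc a b ×ˢ S))
    (hFK : ∀ t ∈ Icc a b, ∀ x ∈ S, ∀ y ∈ S, F t x - F t y ≤ K * max (x - y) 0)
    (hu : ContinuousOn u (Icc a b)) (hv : ContinuousOn v (Icc a b))
    (huS : MapsTo u (Icc a b) S) (hvS : MapsTo v (Icc a b) S) (ha : u a ≤ v a)
    (hu_sub : ∀ t ∈ Icc a b, u t ≤ u a + ∫ r in a..t, F r (u r))
    (hv_super : ∀ t ∈ Icc a b, v a + ∫ r in a..t, F r (v r) ≤ v t) :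
    ∀ t ∈ Icc a b, u t ≤ v t := by
  have hFu : ContinuousOn (fun r => F r (u r)) (Icc a b) :=
    hF.comp (continuousOn_id.prodMk hu) fun r hr => ⟨hr, huS hr⟩
  have hFv : ContinuousOn (fun r => F r (v r)) (Icc a b) :=
    hF.comp (continuousOn_id.prodMk hv) fun r hr => ⟨hr, hvS hr⟩
  set w := fun r => max (u r - v r) 0
  have hw : ContinuousOn w (Icc a b) := (hu.sub hv).sup continuousOn_const
  have hw_le : ∀ t ∈ Icc a b, w t ≤ K * ∫ r in a..t, w r := by
    intro t ht
    have hsub : Icc a t ⊆ Icc a b := Icc_subset_Icc_right ht.2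
    have hint {f : ℝ → ℝ} (hf : ContinuousOn f (Icc a b)) : IntervalIntegrable f volume a t :=
      (hf.mono hsub).intervalIntegrable_of_Icc ht.1
    have hdiff : u t - v t ≤ K * ∫ r in a..t, w r := calc
      u t - v t ≤ (u a - v a) + ∫ r in a..t, (F r (u r) - F r (v r)) := by
        rw [integral_sub (hint hFu) (hint hFv)]
        linarith [hu_sub t ht, hv_super t ht]
      _ ≤ 0 + ∫ r in a..t, K * w r := by
        gcongr
        · exact sub_nonpos.2 ha
        · exact integral_mono_on ht.1 ((hint hFu).sub (hint hFv))
            ((hint hw).const_mul K) fun r hr => hFK r (hsub hr) _ (huS (hsub hr)) _ (hvS (hsub hr))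
      _ = K * ∫ r in a..t, w r := by rw [zero_add]; exact integral_const_mul K w
    exact max_le hdiff (mul_nonneg hK (integral_nonneg ht.1 fun r _ => le_max_right _ _))
  exact fun t ht =>
    sub_nonpos.1 ((le_max_left _ _).trans (le_zero_of_le_mul_integral hK hw hw_le t ht))

theorem gronwall_comparison_relaxed_general
    (T : ℝ) (hT : 0 < T)
    (F F' : ℝ → ℝ → ℝ)
    (hFcont : ContinuousOn (fun p : ℝ × ℝ => F p.1 p.2) (Icc (0 : ℝ) T ×ˢ Ioi (0 : ℝ)))
    (hFmono : ∀ t ∈ Icc (0 : ℝ) T, MonotoneOn (F t) (Ioi (0 : ℝ)))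
    (hFderiv : ∀ t ∈ Icc (0 : ℝ) T, ∀ x ∈ Ioi (0 : ℝ), HasDerivAt (F t) (F' t x) x)
    (hF'bdd : ∀ ε > (0 : ℝ), ∃ B : ℝ, ∀ t ∈ Icc (0 : ℝ) T, ∀ x ∈ Ici ε, |F' t x| ≤ B)
    (U V : ℝ → ℝ)
    (hUcont : ContinuousOn U (Icc (0 : ℝ) T))
    (hVcont : ContinuousOn V (Icc (0 : ℝ) T))
    (hUV0 : U 0 ≤ V 0)
    (tU tV : ℝ → ℝ)
    (htU : ∀ δ : ℝ, tU δ = sInf ({s | s ∈ Icc (0 : ℝ) T ∧ U s = δ} ∪ {T}))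
    (htV : ∀ δ : ℝ, tV δ = sInf ({s | s ∈ Icc (0 : ℝ) T ∧ V s = δ} ∪ {T}))
    (hUineq : ∀ t ∈ Icc (0 : ℝ) T, t < tU 0 →
      U t ≤ U 0 + ∫ r in (0 : ℝ)..t, F r (U r))
    (hVeq : ∀ t ∈ Icc (0 : ℝ) T, t < tV 0 →
      V t = V 0 + ∫ r in (0 : ℝ)..t, F r (V r)) :
    ∀ δ : ℝ, 0 < δ → δ < U 0 →
      (∀ t ∈ Icc (0 : ℝ) T, t < min (tU δ) (tV δ) → U t ≤ V t) ∧ tU δ ≤ tV δ := by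
  obtain rfl : tU = firstHitTime T U := funext htU
  obtain rfl : tV = firstHitTime T V := funext htV
  intro δ hδ hδU
  have hδV : δ ≤ V 0 := hδU.le.trans hUV0
  obtain ⟨B, hB⟩ := hF'bdd δ hδ
  have hB0 : 0 ≤ B := (abs_nonneg _).trans (hB 0 ⟨le_rfl, hT.le⟩ δ self_mem_Ici)
  have hF_lip : ∀ t ∈ Icc 0 T, ∀ x ∈ Ioi δ, ∀ y ∈ Ioi δ, F t x - F t y ≤ B * max (x - y) 0 :=
    fun t ht x hx y hy => sub_le_mul_max_sub_zero_of_monotoneOn (convex_Ioi δ)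
      ((hFmono t ht).mono (Ioi_subset_Ioi hδ.le))
      (fun z hz => (hFderiv t ht z (hδ.trans hz)).hasDerivWithinAt)
      (fun z hz => hB t ht z (mem_Ici_of_Ioi hz)) hx hy
  have hUV : ∀ s ∈ Icc 0 T, s < min (firstHitTime T U δ) (firstHitTime T V δ) → U s ≤ V s := by
    intro s hs hsm
    rw [lt_min_iff] at hsm
    have hsub : Icc 0 s ⊆ Icc 0 T := Icc_subset_Icc_right hs.2
    have hsU0 := hsm.1.trans_le (firstHitTime_le_firstHitTime hUcont hδ.le hδU.le)
    have hsV0 := hsm.2.trans_le (firstHitTime_le_firstHitTime hVcont hδ.le hδV)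
    refine le_of_integral_subsolution_of_supersolution hB0
      (hFcont.mono (prod_mono hsub (Ioi_subset_Ioi hδ.le))) (fun t ht => hF_lip t (hsub ht))
      (hUcont.mono hsub) (hVcont.mono hsub)
      (mapsTo_Ioi_of_lt_firstHitTime hUcont hδU.le hs.2 hsm.1)
      (mapsTo_Ioi_of_lt_firstHitTime hVcont hδV hs.2 hsm.2)
      hUV0 (fun t ht => hUineq t (hsub ht) (ht.2.trans_lt hsU0))
      (fun t ht => (hVeq t (hsub ht) (ht.2.trans_lt hsV0)).ge) s ⟨hs.1, le_rfl⟩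
  exact ⟨hUV, firstHitTime_le_firstHitTime_of_le hUcont hVcont hδU.le hUV0 hUV⟩

/-- Relaxed Grönwall-type comparison principle, valid up to the first time the functions hit a
positive level `δ`, for `F(t,x)` monotone in `x` and locally Lipschitz in `x` away from `0`. -/
theorem gronwall_comparison_relaxed
    (T : ℝ) (hT : 0 < T)
    (F F' : ℝ → ℝ → ℝ)
    (hFcont : ContinuousOn (fun p : ℝ × ℝ => F p.1 p.2) (Icc (0 : ℝ) T ×ˢ Ioi (0 : ℝ)))
    (hFmono : ∀ t ∈ Icc (0 : ℝ) T, MonotoneOn (F t) (Ioi (0 : ℝ)))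
    (hFderiv : ∀ t ∈ Icc (0 : ℝ) T, ∀ x ∈ Ioi (0 : ℝ), HasDerivAt (F t) (F' t x) x)
    (hF'cont : ∀ t ∈ Icc (0 : ℝ) T, ContinuousOn (F' t) (Ioi (0 : ℝ)))
    (hF'bdd : ∀ ε > (0 : ℝ), ∃ B : ℝ, ∀ t ∈ Icc (0 : ℝ) T, ∀ x ∈ Ici ε, |F' t x| ≤ B)
    (U V : ℝ → ℝ)
    (hUcont : ContinuousOn U (Icc (0 : ℝ) T))
    (hVcont : ContinuousOn V (Icc (0 : ℝ) T))
    (hU0pos : 0 < U 0) (hUV0 : U 0 ≤ V 0)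
    (tU tV : ℝ → ℝ)
    (htU : ∀ δ : ℝ, tU δ = sInf ({s | s ∈ Icc (0 : ℝ) T ∧ U s = δ} ∪ {T}))
    (htV : ∀ δ : ℝ, tV δ = sInf ({s | s ∈ Icc (0 : ℝ) T ∧ V s = δ} ∪ {T}))
    (hUineq : ∀ t ∈ Icc (0 : ℝ) T, t < tU 0 →
      U t ≤ U 0 + ∫ r in (0 : ℝ)..t, F r (U r))
    (hVeq : ∀ t ∈ Icc (0 : ℝ) T, t < tV 0 →
      V t = V 0 + ∫ r in (0 : ℝ)..t, F r (V r)) :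
    ∀ δ : ℝ, 0 < δ → δ < U 0 →
      (∀ t ∈ Icc (0 : ℝ) T, t < min (tU δ) (tV δ) → U t ≤ V t) ∧ tU δ ≤ tV δ :=
  gronwall_comparison_relaxed_general T hT F F' hFcont hFmono hFderiv hF'bdd U V hUcont hVcont hUV0
    tU tV htU htV hUineq hVeq
end

section
/- Let σ > 0 and z₀ > 0, and let w : [0,∞) → [0,∞) be the function satisfying w(x)·e^{w(x)} = x for all x ≥ 0 (the Lambert W function restricted to [0,∞)). Define Z : [0,∞) → ℝ by Z(s) = σ√s/2 + z₀·exp(w(σ√s/(2z₀))). Then Z(0) = z₀, Z(s) > 0 for all s ≥ 0, and Z satisfies the integral equation Z(s) = z₀ + σ√s − (σ²/8)·∫₀ˢ Z(r)⁻¹ dr for all s ≥ 0. -/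
/-!
Writing `W = w(σ√s/(2z₀))`, the defining relation `W e^W = σ√s/(2z₀)` turns `Z` into
`z₀ e^W (1 + W)`. Differentiating `w` as the inverse of `t ↦ t e^t` then gives
`Z' = σ/(2√s) − σ²/(8Z)` for `s > 0`; since `Z ≥ z₀ > 0` is continuous on `[0, ∞)`,
the integral equation follows from the fundamental theorem of calculus applied to `Z − σ√·`.
-/

open Set intervalIntegral Real

def IsLambertW (w : ℝ → ℝ) : Prop :=
  ∀ x : ℝ, 0 ≤ x → 0 ≤ w x ∧ w x * exp (w x) = x

namespace IsLambertW

variable {w : ℝ → ℝ}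

theorem apply_zero (hw : IsLambertW w) : w 0 = 0 :=
  (mul_eq_zero.1 (hw 0 le_rfl).2).resolve_right (exp_ne_zero _)

theorem monotoneOn (hw : IsLambertW w) : MonotoneOn w (Ici 0) := by
  intro x hx y hy hxy
  obtain ⟨hwx, hfx⟩ := hw x hx
  obtain ⟨hwy, hfy⟩ := hw y hy
  by_contra! h
  nlinarith [exp_le_exp.2 h.le, exp_pos (w y)]

theorem sub_le_sub_of_le (hw : IsLambertW w) {x y : ℝ} (hx : 0 ≤ x) (hxy : x ≤ y) :
    w y - w x ≤ y - x := by
  have hmono := hw.monotoneOn hx (hx.trans hxy) hxy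
  obtain ⟨hwx, hfx⟩ := hw x hx
  obtain ⟨hwy, hfy⟩ := hw y (hx.trans hxy)
  nlinarith [exp_le_exp.2 hmono, one_le_exp hwx]

theorem lipschitzOnWith (hw : IsLambertW w) : LipschitzOnWith 1 w (Ici 0) := by
  refine LipschitzOnWith.of_le_add fun x hx y hy => ?_
  rcases le_total x y with hxy | hyx
  · linarith [hw.monotoneOn hx hy hxy, dist_nonneg (x := x) (y := y)]
  · linarith [hw.sub_le_sub_of_le hy hyx, dist_eq x y ▸ le_abs_self (x - y)]

theorem continuousOn (hw : IsLambertW w) : ContinuousOn w (Ici 0) :=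
  hw.lipschitzOnWith.continuousOn

theorem hasDerivAt (hw : IsLambertW w) {x : ℝ} (hx : 0 < x) :
    HasDerivAt w (exp (w x) * (1 + w x))⁻¹ x := by
  have hf : HasDerivAt (fun t => t * exp t) (exp (w x) * (1 + w x)) (w x) :=
    ((hasDerivAt_id' (w x)).mul (hasDerivAt_exp (w x))).congr_deriv (by ring)
  have hne : exp (w x) * (1 + w x) ≠ 0 := by
    have := (hw x hx.le).1
    positivity
  refine hf.of_local_left_inverse (hw.continuousOn.continuousAt (Ici_mem_nhds hx)) hne ?_
  filter_upwards [eventually_gt_nhds hx] with y hy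
  exact (hw y hy.le).2

end IsLambertW

noncomputable def comparisonSolution (σ z₀ : ℝ) (w : ℝ → ℝ) (s : ℝ) : ℝ :=
  σ * √s / 2 + z₀ * exp (w (σ * √s / (2 * z₀)))

section comparisonSolution

variable {σ z₀ : ℝ} {w : ℝ → ℝ}

theorem comparisonSolution_zero (hw : IsLambertW w) : comparisonSolution σ z₀ w 0 = z₀ := by
  simp [comparisonSolution, hw.apply_zero]

theorem le_comparisonSolution (hσ : 0 ≤ σ) (hz₀ : 0 ≤ z₀) (hw : IsLambertW w) (s : ℝ) :
    z₀ ≤ comparisonSolution σ z₀ w s := by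
  have hW := (hw (σ * √s / (2 * z₀)) (by positivity)).1
  have : 0 ≤ σ * √s / 2 := by positivity
  unfold comparisonSolution
  nlinarith [one_le_exp hW]

theorem continuous_comparisonSolution (hσ : 0 ≤ σ) (hz₀ : 0 ≤ z₀) (hw : IsLambertW w) :
    Continuous (comparisonSolution σ z₀ w) := by
  have hinner : Continuous fun s : ℝ => σ * √s / (2 * z₀) := by fun_prop
  have hcomp : Continuous fun s : ℝ => w (σ * √s / (2 * z₀)) :=
    hw.continuousOn.comp_continuous hinner fun s => mem_Ici.2 (by positivity)
  exact ((continuous_const.mul continuous_sqrt).div_const 2).add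
    (continuous_const.mul (continuous_exp.comp hcomp))

theorem comparisonSolution_eq_mul_one_add (hσ : 0 ≤ σ) (hz₀ : 0 < z₀) (hw : IsLambertW w) (s : ℝ) :
    comparisonSolution σ z₀ w s =
      z₀ * exp (w (σ * √s / (2 * z₀))) * (1 + w (σ * √s / (2 * z₀))) := by
  have hWE := (hw (σ * √s / (2 * z₀)) (by positivity)).2
  have : σ * √s / 2 = z₀ * (σ * √s / (2 * z₀)) := by field_simp
  rw [comparisonSolution]
  linear_combination (-z₀) * hWE + this

theorem hasDerivAt_comparisonSolution (hσ : 0 < σ) (hz₀ : 0 < z₀) (hw : IsLambertW w)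
    {s : ℝ} (hs : 0 < s) :
    HasDerivAt (comparisonSolution σ z₀ w)
      (σ / (2 * √s) - σ ^ 2 / 8 * (comparisonSolution σ z₀ w s)⁻¹) s := by
  set u := σ * √s / (2 * z₀) with hu_def
  have hq : 0 < √s := sqrt_pos.2 hs
  have hu : 0 < u := by positivity
  have hW : 0 ≤ w u := (hw u hu.le).1
  have hσ_eq : σ = 2 * z₀ * (w u * exp (w u)) / √s := by
    rw [(hw u hu.le).2, hu_def]
    field_simp
  have hsqrt : HasDerivAt (fun t => σ * √t) (σ * (1 / (2 * √s))) s :=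
    (hasDerivAt_sqrt hs.ne').const_mul σ
  have hderiv := (hsqrt.div_const 2).add
    (((hasDerivAt_exp (w u)).comp s ((hw.hasDerivAt hu).comp s (hsqrt.div_const (2 * z₀)))).const_mul z₀)
  refine hderiv.congr_deriv ?_
  rw [comparisonSolution_eq_mul_one_add hσ.le hz₀ hw, ← hu_def, hσ_eq]
  field_simp
  ring

theorem comparisonSolution_eq_integral (hσ : 0 < σ) (hz₀ : 0 < z₀) (hw : IsLambertW w)
    {s : ℝ} (hs : 0 ≤ s) :
    comparisonSolution σ z₀ w s =
      z₀ + σ * √s - σ ^ 2 / 8 * ∫ r in (0 : ℝ)..s, (comparisonSolution σ z₀ w r)⁻¹ := by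
  set Z := comparisonSolution σ z₀ w
  have hZ_cont := continuous_comparisonSolution hσ.le hz₀.le hw
  have hZ_inv : Continuous fun r => (Z r)⁻¹ :=
    hZ_cont.inv₀ fun r => (hz₀.trans_le (le_comparisonSolution hσ.le hz₀.le hw r)).ne'
  have hZ_deriv : ∀ t, 0 < t → HasDerivAt Z (σ / (2 * √t) - σ ^ 2 / 8 * (Z t)⁻¹) t :=
    fun t ht => hasDerivAt_comparisonSolution hσ hz₀ hw ht
  have hFTC := integral_eq_sub_of_hasDerivAt_of_le hs
    (f := fun t => Z t - σ * √t) (f' := fun t => -(σ ^ 2 / 8 * (Z t)⁻¹))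
    (by fun_prop)
    (fun t ht => ((hZ_deriv t ht.1).sub ((hasDerivAt_sqrt ht.1.ne').const_mul σ)).congr_deriv
      (by ring))
    ((hZ_inv.const_mul _).neg.intervalIntegrable 0 s)
  have hZ_zero : Z 0 = z₀ := comparisonSolution_zero hw
  rw [integral_neg, integral_const_mul, hZ_zero] at hFTC
  simp only [sqrt_zero, mul_zero, sub_zero] at hFTC
  linarith

end comparisonSolution

/-- The function `Z(s) = σ√s/2 + z₀·exp(W(σ√s/(2z₀)))`, where `W` is the Lambert W function
on `[0,∞)`, solves the integral equation `Z(s) = z₀ + σ√s − (σ²/8)·∫₀ˢ Z(r)⁻¹ dr`. -/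
theorem lambert_solution_of_comparison_ODE
    (σ z₀ : ℝ) (hσ : 0 < σ) (hz₀ : 0 < z₀)
    (w : ℝ → ℝ)
    (hw : ∀ x : ℝ, 0 ≤ x → 0 ≤ w x ∧ w x * Real.exp (w x) = x)
    (Z : ℝ → ℝ)
    (hZ : ∀ s : ℝ, Z s = σ * Real.sqrt s / 2 + z₀ * Real.exp (w (σ * Real.sqrt s / (2 * z₀)))) :
    Z 0 = z₀ ∧ (∀ s : ℝ, 0 ≤ s → 0 < Z s) ∧
      ∀ s : ℝ, 0 ≤ s →
        Z s = z₀ + σ * Real.sqrt s - σ ^ 2 / 8 * ∫ r in (0 : ℝ)..s, (Z r)⁻¹ := by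
  obtain rfl : Z = comparisonSolution σ z₀ w := funext hZ
  exact ⟨comparisonSolution_zero hw,
    fun s _ => hz₀.trans_le (le_comparisonSolution hσ.le hz₀.le hw s),
    fun s hs => comparisonSolution_eq_integral hσ hz₀ hw hs⟩
end

section
/- Let x₀, y₀ > 0 and 0 < σ < 4, and let w : [0,∞) → [0,∞) be the function satisfying w(x)·e^{w(x)} = x for all x ≥ 0 (the Lambert W function restricted to [0,∞)). Define H(x) = (σ√x/2 + x₀·exp(w(σ√x/(2x₀))))² for x ≥ 0. Let V : [0,∞) → ℝ be differentiable with V(0) = 0 and V'(s) = H(V(s))/(4(y₀² + s)) + 1/4 for all s ≥ 0. Let κ ∈ (σ²/4, 4) and let M > 0 satisfy (σ²/4)·(1 + 1/w(σ√M/(2x₀)))² = κ. Then V(s) ≤ max(M/y₀², 1/(4−κ))·(y₀² + s) for all s ≥ 0. -/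
open Set Real

/-- Bound on the solution of the ODE `V' = H(V)/(4(y₀²+s)) + 1/4`, where
`H(x) = (σ√x/2 + x₀·exp(W(σ√x/(2x₀))))²` and `W` is the Lambert W function on `[0,∞)`. -/
theorem bound_on_time_change_ODE
    (x₀ y₀ σ : ℝ) (hx₀ : 0 < x₀) (hy₀ : 0 < y₀) (hσ0 : 0 < σ) (hσ4 : σ < 4)
    (w : ℝ → ℝ)
    (hw : ∀ x : ℝ, 0 ≤ x → 0 ≤ w x ∧ w x * Real.exp (w x) = x)
    (H : ℝ → ℝ)
    (hH : ∀ x : ℝ, 0 ≤ x →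
      H x = (σ * Real.sqrt x / 2 + x₀ * Real.exp (w (σ * Real.sqrt x / (2 * x₀)))) ^ 2)
    (V : ℝ → ℝ) (hV0 : V 0 = 0)
    (hV : ∀ s : ℝ, 0 ≤ s →
      HasDerivWithinAt V (H (V s) / (4 * (y₀ ^ 2 + s)) + 1 / 4) (Ici (0 : ℝ)) s)
    (κ M : ℝ) (hκ : κ ∈ Ioo (σ ^ 2 / 4) 4) (hM : 0 < M)
    (hMκ : σ ^ 2 / 4 * (1 + 1 / w (σ * Real.sqrt M / (2 * x₀))) ^ 2 = κ) :
    ∀ s : ℝ, 0 ≤ s → V s ≤ max (M / y₀ ^ 2) (1 / (4 - κ)) * (y₀ ^ 2 + s) := by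
  obtain ⟨hκσ, hκ4⟩ := hκ
  have hy2 : (0:ℝ) < y₀ ^ 2 := by positivity
  have h4κ : (0:ℝ) < 4 - κ := by linarith
  set C := max (M / y₀ ^ 2) (1 / (4 - κ)) with hCdef
  have hC1 : M / y₀ ^ 2 ≤ C := le_max_left _ _
  have hC2 : 1 / (4 - κ) ≤ C := le_max_right _ _
  have hCpos : 0 < C := lt_of_lt_of_le (by positivity) hC1
  have hC1' : M ≤ C * y₀ ^ 2 := by
    rw [div_le_iff₀ hy2] at hC1; linarith
  have hC2' : 1 ≤ (4 - κ) * C := by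
    rw [div_le_iff₀ h4κ] at hC2; linarith
  -- positivity of w on positives
  have hwpos : ∀ a : ℝ, 0 < a → 0 < w a := by
    intro a ha
    rcases (hw a ha.le).1.eq_or_lt with h | h
    · exfalso
      have := (hw a ha.le).2
      rw [← h] at this
      simp at this
      linarith
    · exact h
  -- monotonicity of w
  have hwmono : ∀ a b : ℝ, 0 ≤ a → a ≤ b → w a ≤ w b := by
    intro a b ha hab
    by_contra h
    push_neg at h
    have hwb := hw b (ha.trans hab)
    have hwa := hw a ha
    have : w b * Real.exp (w b) < w a * Real.exp (w a) :=
      mul_lt_mul'' h (Real.exp_lt_exp.mpr h) hwb.1 (Real.exp_pos _).le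
    rw [hwa.2, hwb.2] at this
    linarith
  -- key estimate : H x ≤ κ x for x ≥ M
  have hHle : ∀ x : ℝ, M ≤ x → H x ≤ κ * x := by
    intro x hx
    have hx0 : 0 < x := lt_of_lt_of_le hM hx
    have hsx : 0 < Real.sqrt x := Real.sqrt_pos.mpr hx0
    have hsM : 0 < Real.sqrt M := Real.sqrt_pos.mpr hM
    set u := σ * Real.sqrt x / (2 * x₀) with hu_def
    set uM := σ * Real.sqrt M / (2 * x₀) with huM_def
    have hu : 0 < u := by positivity
    have huM : 0 < uM := by positivity
    have huMu : uM ≤ u := by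
      rw [hu_def, huM_def]
      have := Real.sqrt_le_sqrt hx
      gcongr
    have hwu : 0 < w u := hwpos u hu
    have hwuM : 0 < w uM := hwpos uM huM
    have hmono : w uM ≤ w u := hwmono _ _ huM.le huMu
    have hexp : Real.exp (w u) = u / w u := by
      rw [eq_div_iff hwu.ne']
      linarith [(hw u hu.le).2]
    have hx₀u : x₀ * (u / w u) = σ * Real.sqrt x / 2 * (1 / w u) := by
      rw [hu_def]; field_simp
    have hsq : Real.sqrt x ^ 2 = x := Real.sq_sqrt hx0.le
    have hHx : H x = σ ^ 2 * x / 4 * (1 + 1 / w u) ^ 2 := by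
      rw [hH x hx0.le, hexp, hx₀u]
      have h2 : σ * Real.sqrt x / 2 + σ * Real.sqrt x / 2 * (1 / w u)
          = σ * Real.sqrt x / 2 * (1 + 1 / w u) := by ring
      rw [h2, mul_pow, show (σ * Real.sqrt x / 2) ^ 2 = σ ^ 2 * Real.sqrt x ^ 2 / 4 by ring,
        hsq]
    rw [hHx, ← hMκ]
    have h1 : (1 + 1 / w u) ^ 2 ≤ (1 + 1 / w uM) ^ 2 := by
      have h0 : 1 / w u ≤ 1 / w uM := one_div_le_one_div_of_le hwuM hmono
      have h00 : 0 ≤ 1 / w u := by positivity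
      nlinarith
    calc σ ^ 2 * x / 4 * (1 + 1 / w u) ^ 2
        ≤ σ ^ 2 * x / 4 * (1 + 1 / w uM) ^ 2 := by
          apply mul_le_mul_of_nonneg_left h1 (by positivity)
      _ = σ ^ 2 / 4 * (1 + 1 / w uM) ^ 2 * x := by ring
  -- comparison argument
  intro s hs
  have key : ∀ ε : ℝ, 0 < ε → V s ≤ (C + ε) * (y₀ ^ 2 + s) := by
    intro ε hε
    have hcont : ContinuousOn V (Icc 0 s) := by
      intro x hx
      exact ((hV x hx.1).continuousWithinAt).mono (fun y hy => hy.1)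
    have hf' : ∀ x ∈ Ico (0:ℝ) s,
        HasDerivWithinAt V (H (V x) / (4 * (y₀ ^ 2 + x)) + 1 / 4) (Ici x) x := by
      intro x hx
      exact (hV x hx.1).mono (Ici_subset_Ici.mpr hx.1)
    have ha : V 0 ≤ (C + ε) * (y₀ ^ 2 + 0) := by rw [hV0]; positivity
    have hB : ∀ x : ℝ, HasDerivAt (fun x => (C + ε) * (y₀ ^ 2 + x)) (C + ε) x := by
      intro x
      simpa using ((hasDerivAt_id x).const_add (y₀ ^ 2)).const_mul (C + ε)
    have hbound : ∀ x ∈ Ico (0:ℝ) s, V x = (C + ε) * (y₀ ^ 2 + x) →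
        H (V x) / (4 * (y₀ ^ 2 + x)) + 1 / 4 < C + ε := by
      intro x hx hVx
      have hx0 : (0:ℝ) ≤ x := hx.1
      have hyx : y₀ ^ 2 ≤ y₀ ^ 2 + x := by linarith
      have hyx0 : 0 < y₀ ^ 2 + x := by linarith
      have hVM : M ≤ V x := by
        rw [hVx]
        calc M ≤ C * y₀ ^ 2 := hC1'
          _ ≤ (C + ε) * (y₀ ^ 2 + x) := by
              apply mul_le_mul (by linarith) hyx hy2.le (by linarith)
      have hHV : H (V x) ≤ κ * V x := hHle _ hVM
      have h1 : H (V x) / (4 * (y₀ ^ 2 + x)) ≤ κ * (C + ε) / 4 := by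
        rw [div_le_iff₀ (by positivity)]
        calc H (V x) ≤ κ * V x := hHV
          _ = κ * ((C + ε) * (y₀ ^ 2 + x)) := by rw [hVx]
          _ = κ * (C + ε) / 4 * (4 * (y₀ ^ 2 + x)) := by ring
      have hκ0 : 0 ≤ κ := by linarith [sq_nonneg σ]
      have : κ * (C + ε) / 4 + 1 / 4 < C + ε := by linarith [hC2', mul_pos h4κ hε]
      linarith
    exact image_le_of_deriv_right_lt_deriv_boundary hcont hf' ha hB hbound ⟨hs, le_refl s⟩
  have hys : 0 < y₀ ^ 2 + s := by linarith
  have : ∀ δ : ℝ, 0 < δ → V s ≤ C * (y₀ ^ 2 + s) + δ := by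
    intro δ hδ
    have := key (δ / (y₀ ^ 2 + s)) (by positivity)
    calc V s ≤ (C + δ / (y₀ ^ 2 + s)) * (y₀ ^ 2 + s) := this
      _ = C * (y₀ ^ 2 + s) + δ := by field_simp
  exact le_of_forall_pos_le_add this
end

section
/- Assume the reverse Loewner flow setup with 0 < σ < 8/π. Then |X(s)| ≤ (πσ/√(64 − π²σ²))·Y(s) for all s ∈ [0,t]. -/
open Set MeasureTheory intervalIntegral Real Filter Topology

/-!
Write `g = 2Y/(X² + Y²)` for the speed of `Y`. Since `β - X = ∫ 2X/(X² + Y²)`, the product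
`Y·(β - X)` has derivative `gβ`, which yields the exact formula
`Y(s)X(s) = yβ(s) + ∫₀ˢ g(r)(β(s) - β(r)) dr`.
Inside the cone `|X| ≤ cY` we have `(Y²)' = 4Y²/(X² + Y²) ≥ 4/(1 + c²)`, so the Hölder bound gives
`β(s) - β(r) ≤ (σ√(1 + c²)/2)·√(Y(s)² - Y(r)²)`, and the substitution `w = Y(r)` turns the
integral into the area `∫_y^{Y(s)} √(Y(s)² - w²) dw` under a circle. Because `y > 0`, the
resulting bound on `Y(s)X(s)` is strictly smaller than `(σ√(1 + c²)/2)·πY(s)²/4 ≤ cY(s)²` as soon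
as `πσ√(1 + c²) ≤ 8c`, which is an equality for `c = πσ/√(64 - π²σ²)`. Hence `|X| < cY` at the
first time the cone could be left.
-/

theorem hasDerivAt_of_eqOn_const_add_integral {f u : ℝ → ℝ} {a b c x : ℝ}
    (hf : ContinuousOn f (Icc a b)) (hu : ∀ s ∈ Icc a b, u s = c + ∫ r in a..s, f r)
    (hx : x ∈ Ioo a b) : HasDerivAt u (f x) x := by
  have hnhds : Icc a b ∈ 𝓝 x := Icc_mem_nhds hx.1 hx.2
  have hint : IntervalIntegrable f volume a x :=
    (hf.mono (Icc_subset_Icc_right hx.2.le)).intervalIntegrable_of_Icc hx.1.le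
  have hmeas : StronglyMeasurableAtFilter f (𝓝 x) :=
    (hf.mono Ioo_subset_Icc_self).stronglyMeasurableAtFilter isOpen_Ioo x hx
  exact ((integral_hasDerivAt_right hint hmeas (hf.continuousAt hnhds)).const_add c)
    |>.congr_of_eventuallyEq (eventually_of_mem hnhds hu)

theorem forall_lt_of_forall_Ioo_lt {f g : ℝ → ℝ} {a b : ℝ} (hf : ContinuousOn f (Icc a b))
    (hg : ContinuousOn g (Icc a b)) (ha : f a < g a)
    (hstep : ∀ s ∈ Ioc a b, (∀ r ∈ Ioo a s, f r < g r) → f s < g s) :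
    ∀ s ∈ Icc a b, f s < g s := by
  by_contra! hbad
  obtain ⟨s₀, hs₀, hle⟩ := hbad
  set S := Icc a b ∩ (g - f) ⁻¹' Iic 0
  have hS : IsCompact S := isCompact_Icc.of_isClosed_subset
    ((hg.sub hf).preimage_isClosed_of_isClosed isClosed_Icc isClosed_Iic) inter_subset_left
  obtain ⟨s, ⟨hsI, hsS⟩, hleast⟩ := hS.exists_isLeast ⟨s₀, hs₀, by simpa using hle⟩
  simp only [mem_preimage, Pi.sub_apply, mem_Iic, sub_nonpos] at hsS
  have has : a < s := hsI.1.lt_of_ne fun h => by subst h; linarith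
  have hbelow : ∀ r ∈ Ioo a s, f r < g r := fun r hr => by
    by_contra! hr'
    exact (hleast ⟨⟨hr.1.le, hr.2.le.trans hsI.2⟩, by simpa using hr'⟩).not_gt hr.2
  linarith [hstep s ⟨has, hsI.2⟩ hbelow]

noncomputable def circlePrimitive (A w : ℝ) : ℝ :=
  (w * √(A ^ 2 - w ^ 2) + A ^ 2 * arcsin (w / A)) / 2

theorem continuous_circlePrimitive (A : ℝ) : Continuous (circlePrimitive A) := by
  unfold circlePrimitive; fun_prop

theorem circlePrimitive_self {A : ℝ} (hA : 0 < A) : circlePrimitive A A = π * A ^ 2 / 4 := by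
  simp [circlePrimitive, div_self hA.ne']
  ring

theorem hasDerivAt_circlePrimitive {A w : ℝ} (hw : |w| < A) :
    HasDerivAt (circlePrimitive A) √(A ^ 2 - w ^ 2) w := by
  have hA : 0 < A := (abs_nonneg w).trans_lt hw
  have hpos : 0 < A ^ 2 - w ^ 2 := by nlinarith [sq_abs w, abs_nonneg w]
  obtain ⟨hwl, hwr⟩ := abs_lt.mp hw
  have hroot : HasDerivAt (fun v => √(A ^ 2 - v ^ 2)) (-(2 * w) / (2 * √(A ^ 2 - w ^ 2))) w := by
    simpa using ((hasDerivAt_pow 2 w).const_sub (A ^ 2)).sqrt hpos.ne'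
  have harc : HasDerivAt (fun v => arcsin (v / A)) (1 / √(1 - (w / A) ^ 2) * (1 / A)) w :=
    (hasDerivAt_arcsin (by rw [ne_eq, div_eq_iff hA.ne']; linarith)
      (by rw [ne_eq, div_eq_iff hA.ne']; linarith)).comp w ((hasDerivAt_id w).div_const A)
  have hscale : √(1 - (w / A) ^ 2) = √(A ^ 2 - w ^ 2) / A := by
    rw [show 1 - (w / A) ^ 2 = (A ^ 2 - w ^ 2) / A ^ 2 by field_simp, sqrt_div hpos.le,
      sqrt_sq hA.le]
  refine ((((hasDerivAt_id w).mul hroot).add (harc.const_mul (A ^ 2))).div_const 2)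
    |>.congr_deriv ?_
  have hsq := sq_sqrt hpos.le
  have hne := (sqrt_pos.mpr hpos).ne'
  rw [hscale, id]
  field_simp
  linear_combination -hsq

theorem mul_sqrt_lt_sq_mul_arcsin {A w : ℝ} (hw : 0 < w) (hwA : w < A) :
    w * √(A ^ 2 - w ^ 2) < A ^ 2 * arcsin (w / A) := by
  have hA : 0 < A := hw.trans hwA
  have hroot : √(A ^ 2 - w ^ 2) < A := by
    rw [sqrt_lt' hA]; nlinarith
  have harc : w / A ≤ arcsin (w / A) := by
    have hx : w / A ≤ 1 := (div_le_one hA).mpr hwA.le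
    simpa [sin_arcsin (by linarith [div_pos hw hA]) hx] using
      sin_le (arcsin_nonneg.mpr (div_pos hw hA).le)
  calc w * √(A ^ 2 - w ^ 2) < w * A := by gcongr
    _ = A ^ 2 * (w / A) := by field_simp
    _ ≤ A ^ 2 * arcsin (w / A) := by gcongr

theorem mul_sqrt_add_circlePrimitive_sub_lt {A w : ℝ} (hw : 0 < w) (hwA : w < A) :
    w * √(A ^ 2 - w ^ 2) + (circlePrimitive A A - circlePrimitive A w) < π * A ^ 2 / 4 := by
  rw [circlePrimitive_self (hw.trans hwA)]
  unfold circlePrimitive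
  linarith [mul_sqrt_lt_sq_mul_arcsin hw hwA]

theorem integral_mul_sqrt_sq_sub_sq {u u' : ℝ → ℝ} {a b A : ℝ} (hab : a ≤ b)
    (hu : ContinuousOn u (Icc a b)) (hu' : ContinuousOn u' (Icc a b))
    (hderiv : ∀ x ∈ Ioo a b, HasDerivAt u (u' x) x) (hlt : ∀ x ∈ Ioo a b, |u x| < A) :
    ∫ x in a..b, u' x * √(A ^ 2 - u x ^ 2) = circlePrimitive A (u b) - circlePrimitive A (u a) :=
  integral_eq_sub_of_hasDerivAt_of_le hab ((continuous_circlePrimitive A).comp_continuousOn hu)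
    (fun x hx => by
      simpa only [mul_comm] using (hasDerivAt_circlePrimitive (hlt x hx)).comp x (hderiv x hx))
    ((hu'.mul (by fun_prop)).intervalIntegrable_of_Icc hab)

structure IsReverseLoewnerFlow (t y : ℝ) (β X Y : ℝ → ℝ) : Prop where
  continuousOn_β : ContinuousOn β (Icc 0 t)
  continuousOn_X : ContinuousOn X (Icc 0 t)
  continuousOn_Y : ContinuousOn Y (Icc 0 t)
  Y_pos : ∀ s ∈ Icc 0 t, 0 < Y s
  X_eq : ∀ s ∈ Icc 0 t, X s = β s - ∫ r in (0 : ℝ)..s, 2 * X r / (X r ^ 2 + Y r ^ 2)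
  Y_eq : ∀ s ∈ Icc 0 t, Y s = y + ∫ r in (0 : ℝ)..s, 2 * Y r / (X r ^ 2 + Y r ^ 2)

namespace IsReverseLoewnerFlow

variable {t y c σ s : ℝ} {β X Y : ℝ → ℝ}

theorem neg (hflow : IsReverseLoewnerFlow t y β X Y) :
    IsReverseLoewnerFlow t y (-β) (-X) Y where
  continuousOn_β := hflow.continuousOn_β.neg
  continuousOn_X := hflow.continuousOn_X.neg
  continuousOn_Y := hflow.continuousOn_Y
  Y_pos := hflow.Y_pos
  X_eq s hs := by
    have hflip : (fun r => 2 * (-X) r / ((-X) r ^ 2 + Y r ^ 2)) =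
        fun r => -(2 * X r / (X r ^ 2 + Y r ^ 2)) := by
      ext r; simp only [Pi.neg_apply, neg_sq]; ring
    rw [hflip, intervalIntegral.integral_neg, Pi.neg_apply, Pi.neg_apply, hflow.X_eq s hs]
    ring
  Y_eq s hs := by simpa only [Pi.neg_apply, neg_sq] using hflow.Y_eq s hs

variable (hflow : IsReverseLoewnerFlow t y β X Y)
include hflow

theorem X_zero (ht : 0 ≤ t) : X 0 = β 0 := by
  simpa using hflow.X_eq 0 ⟨le_rfl, ht⟩

theorem Y_zero (ht : 0 ≤ t) : Y 0 = y := by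
  simpa using hflow.Y_eq 0 ⟨le_rfl, ht⟩

theorem continuousOn_two_mul_div {f : ℝ → ℝ} (hf : ContinuousOn f (Icc 0 t)) :
    ContinuousOn (fun r => 2 * f r / (X r ^ 2 + Y r ^ 2)) (Icc 0 t) :=
  (continuousOn_const.mul hf).div
    ((hflow.continuousOn_X.pow 2).add (hflow.continuousOn_Y.pow 2))
    fun r hr => by nlinarith [hflow.Y_pos r hr, sq_nonneg (X r)]

theorem hasDerivAt_Y {x : ℝ} (hx : x ∈ Ioo 0 t) :
    HasDerivAt Y (2 * Y x / (X x ^ 2 + Y x ^ 2)) x :=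
  hasDerivAt_of_eqOn_const_add_integral (hflow.continuousOn_two_mul_div hflow.continuousOn_Y)
    hflow.Y_eq hx

theorem hasDerivAt_β_sub_X {x : ℝ} (hx : x ∈ Ioo 0 t) :
    HasDerivAt (fun s => β s - X s) (2 * X x / (X x ^ 2 + Y x ^ 2)) x :=
  hasDerivAt_of_eqOn_const_add_integral (c := 0)
    (hflow.continuousOn_two_mul_div hflow.continuousOn_X)
    (fun s hs => by rw [hflow.X_eq s hs]; ring) hx

theorem Y_mul_β_sub_X (hs : s ∈ Icc 0 t) :
    Y s * (β s - X s) = ∫ r in (0 : ℝ)..s, 2 * Y r / (X r ^ 2 + Y r ^ 2) * β r := by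
  have hsub : uIcc 0 s ⊆ Icc 0 t := uIcc_subset_Icc (left_mem_Icc.2 (hs.1.trans hs.2)) hs
  have hIoo : Ioo (min 0 s) (max 0 s) ⊆ Ioo 0 t := by
    rw [min_eq_left hs.1, max_eq_right hs.1]; exact Ioo_subset_Ioo_right hs.2
  have hparts := integral_deriv_mul_eq_sub_of_hasDerivAt
    (hflow.continuousOn_Y.mono hsub) ((hflow.continuousOn_β.sub hflow.continuousOn_X).mono hsub)
    (fun x hx => hflow.hasDerivAt_Y (hIoo hx)) (fun x hx => hflow.hasDerivAt_β_sub_X (hIoo hx))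
    (((hflow.continuousOn_two_mul_div hflow.continuousOn_Y).mono hsub).intervalIntegrable)
    (((hflow.continuousOn_two_mul_div hflow.continuousOn_X).mono hsub).intervalIntegrable)
  simp only [Pi.sub_apply] at hparts
  rw [← hflow.X_zero (hs.1.trans hs.2), sub_self, mul_zero, sub_zero] at hparts
  rw [← hparts]
  congr 1 with r
  ring

theorem Y_mul_X (hs : s ∈ Icc 0 t) :
    Y s * X s = y * β s + ∫ r in (0 : ℝ)..s, 2 * Y r / (X r ^ 2 + Y r ^ 2) * (β s - β r) := by
  have hsub : uIcc 0 s ⊆ Icc 0 t := uIcc_subset_Icc (left_mem_Icc.2 (hs.1.trans hs.2)) hs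
  have hg := (hflow.continuousOn_two_mul_div hflow.continuousOn_Y).mono hsub
  have hint : ∫ r in (0 : ℝ)..s, 2 * Y r / (X r ^ 2 + Y r ^ 2) = Y s - y := by
    linarith [hflow.Y_eq s hs]
  have hgβ : IntervalIntegrable (fun r => 2 * Y r / (X r ^ 2 + Y r ^ 2) * β r) volume 0 s :=
    (hg.mul (hflow.continuousOn_β.mono hsub)).intervalIntegrable
  simp_rw [mul_sub]
  rw [integral_sub (hg.intervalIntegrable.mul_const _) hgβ, intervalIntegral.integral_mul_const,
    hint, ← hflow.Y_mul_β_sub_X hs]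
  ring

theorem four_mul_sub_le (hs : s ∈ Icc 0 t) (hcone : ∀ r ∈ Ioo 0 s, |X r| ≤ c * Y r)
    {r : ℝ} (hr : r ∈ Icc 0 s) : 4 * (s - r) ≤ (1 + c ^ 2) * (Y s ^ 2 - Y r ^ 2) := by
  have hsub : Icc 0 s ⊆ Icc 0 t := Icc_subset_Icc_right hs.2
  have hmono : MonotoneOn (fun r => (1 + c ^ 2) * Y r ^ 2 - 4 * r) (Icc 0 s) := by
    refine monotoneOn_of_hasDerivWithinAt_nonneg (convex_Icc 0 s)
      ((continuousOn_const.mul ((hflow.continuousOn_Y.mono hsub).pow 2)).sub (by fun_prop))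
      (f' := fun x => (1 + c ^ 2) * (4 * Y x ^ 2 / (X x ^ 2 + Y x ^ 2)) - 4)
      (fun x hx => ?_) (fun x hx => ?_) <;> rw [interior_Icc] at hx
    · refine ((((hflow.hasDerivAt_Y ⟨hx.1, hx.2.trans_le hs.2⟩).pow 2).const_mul _).sub
        ((hasDerivAt_id x).const_mul 4)).hasDerivWithinAt.congr_deriv ?_
      ring
    · have hY := hflow.Y_pos x ⟨hx.1.le, hx.2.le.trans hs.2⟩
      have hX : X x ^ 2 ≤ c ^ 2 * Y x ^ 2 := by
        rw [← sq_abs, ← mul_pow]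
        exact pow_le_pow_left₀ (abs_nonneg _) (hcone x hx) 2
      rw [sub_nonneg, ← mul_div_assoc, le_div_iff₀ (by positivity)]
      linarith
  linarith [hmono hr (right_mem_Icc.2 hs.1) hr.2]

theorem Y_lt_of_cone (hs : s ∈ Icc 0 t) (hcone : ∀ r ∈ Ioo 0 s, |X r| ≤ c * Y r)
    {r : ℝ} (hr : r ∈ Ico 0 s) : Y r < Y s := by
  have hgrowth := hflow.four_mul_sub_le hs hcone (Ico_subset_Icc_self hr)
  have hsq : Y r ^ 2 < Y s ^ 2 := by
    by_contra! h
    nlinarith [hr.2, mul_nonneg (sq_nonneg c) (sub_nonneg.2 h)]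
  exact lt_of_pow_lt_pow_left₀ 2 (hflow.Y_pos s hs).le hsq

theorem β_sub_le_of_cone (hσ : 0 ≤ σ)
    (hβ : ∀ r ∈ Icc (0 : ℝ) t, ∀ s ∈ Icc (0 : ℝ) t, |β s - β r| ≤ σ * √|s - r|)
    (hs : s ∈ Icc 0 t) (hcone : ∀ r ∈ Ioo 0 s, |X r| ≤ c * Y r) {r : ℝ} (hr : r ∈ Icc 0 s) :
    β s - β r ≤ σ * √(1 + c ^ 2) / 2 * √(Y s ^ 2 - Y r ^ 2) := by
  have hroot : 2 * √(s - r) ≤ √(1 + c ^ 2) * √(Y s ^ 2 - Y r ^ 2) := by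
    have h := sqrt_le_sqrt (hflow.four_mul_sub_le hs hcone hr)
    rwa [sqrt_mul (by norm_num), sqrt_mul (by positivity), show (4 : ℝ) = 2 ^ 2 by norm_num,
      sqrt_sq (by norm_num)] at h
  calc β s - β r ≤ σ * √|s - r| := (le_abs_self _).trans (hβ r ⟨hr.1, hr.2.trans hs.2⟩ s hs)
    _ = σ * √(s - r) := by rw [abs_of_nonneg (sub_nonneg.2 hr.2)]
    _ ≤ σ * √(1 + c ^ 2) / 2 * √(Y s ^ 2 - Y r ^ 2) := by nlinarith

theorem integral_mul_β_sub_le_of_cone (hσ : 0 ≤ σ)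
    (hβ : ∀ r ∈ Icc (0 : ℝ) t, ∀ s ∈ Icc (0 : ℝ) t, |β s - β r| ≤ σ * √|s - r|)
    (hs : s ∈ Icc 0 t) (hcone : ∀ r ∈ Ioo 0 s, |X r| ≤ c * Y r) :
    ∫ r in (0 : ℝ)..s, 2 * Y r / (X r ^ 2 + Y r ^ 2) * (β s - β r) ≤
      σ * √(1 + c ^ 2) / 2 *
        (circlePrimitive (Y s) (Y s) - circlePrimitive (Y s) (Y 0)) := by
  have hsub : Icc 0 s ⊆ Icc 0 t := Icc_subset_Icc_right hs.2
  have hg := (hflow.continuousOn_two_mul_div hflow.continuousOn_Y).mono hsub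
  have hY := hflow.continuousOn_Y.mono hsub
  have hβ' := hflow.continuousOn_β.mono hsub
  have hg0 : ∀ r ∈ Icc 0 s, 0 ≤ 2 * Y r / (X r ^ 2 + Y r ^ 2) := fun r hr =>
    have := hflow.Y_pos r (hsub hr); by positivity
  have hchange := integral_mul_sqrt_sq_sub_sq (A := Y s) hs.1 hY hg
    (fun x hx => hflow.hasDerivAt_Y ⟨hx.1, hx.2.trans_le hs.2⟩)
    (fun x hx => by
      rw [abs_of_pos (hflow.Y_pos x (hsub (Ioo_subset_Icc_self hx)))]
      exact hflow.Y_lt_of_cone hs hcone (Ioo_subset_Ico_self hx))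
  rw [← hchange, ← intervalIntegral.integral_const_mul]
  refine integral_mono_on hs.1
    ((hg.mul (continuousOn_const.sub hβ')).intervalIntegrable_of_Icc hs.1)
    ((continuousOn_const.mul (hg.mul (by fun_prop))).intervalIntegrable_of_Icc hs.1)
    fun r hr => ?_
  rw [mul_left_comm]
  exact mul_le_mul_of_nonneg_left (hflow.β_sub_le_of_cone hσ hβ hs hcone hr) (hg0 r hr)

theorem X_lt_of_cone (hσ : 0 < σ) (hβ0 : β 0 = 0)
    (hβ : ∀ r ∈ Icc (0 : ℝ) t, ∀ s ∈ Icc (0 : ℝ) t, |β s - β r| ≤ σ * √|s - r|)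
    (hc : π * σ * √(1 + c ^ 2) ≤ 8 * c) (hs : s ∈ Ioc 0 t)
    (hcone : ∀ r ∈ Ioo 0 s, |X r| ≤ c * Y r) : X s < c * Y s := by
  have hsI : s ∈ Icc 0 t := Ioc_subset_Icc_self hs
  have h0 : (0 : ℝ) ∈ Icc 0 s := left_mem_Icc.2 hs.1.le
  set A := Y s
  set κ := σ * √(1 + c ^ 2) / 2 with hκ_def
  have hA : 0 < A := hflow.Y_pos s hsI
  have hY0 := hflow.Y_zero (hs.1.le.trans hs.2)
  have hy : 0 < y := hY0 ▸ hflow.Y_pos 0 (Icc_subset_Icc_right hs.2 h0)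
  have hyA : y < A := hY0 ▸ hflow.Y_lt_of_cone hsI hcone ⟨le_rfl, hs.1⟩
  have hyβ : y * β s ≤ y * (κ * √(A ^ 2 - y ^ 2)) := by
    have h := hflow.β_sub_le_of_cone hσ.le hβ hsI hcone h0
    rw [hβ0, sub_zero, hY0] at h
    exact mul_le_mul_of_nonneg_left h hy.le
  have hκ : κ * (π * A ^ 2 / 4) ≤ c * A ^ 2 := by
    rw [hκ_def]
    linarith [mul_le_mul_of_nonneg_right hc (sq_nonneg A)]
  have hmain : A * X s < A * (c * A) := calc
    A * X s = y * β s + ∫ r in (0 : ℝ)..s, 2 * Y r / (X r ^ 2 + Y r ^ 2) * (β s - β r) :=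
      hflow.Y_mul_X hsI
    _ ≤ y * (κ * √(A ^ 2 - y ^ 2)) + κ * (circlePrimitive A A - circlePrimitive A y) :=
      add_le_add hyβ (hY0 ▸ hflow.integral_mul_β_sub_le_of_cone hσ.le hβ hsI hcone)
    _ = κ * (y * √(A ^ 2 - y ^ 2) + (circlePrimitive A A - circlePrimitive A y)) := by ring
    _ < κ * (π * A ^ 2 / 4) := by
      gcongr
      exact mul_sqrt_add_circlePrimitive_sub_lt hy hyA
    _ ≤ A * (c * A) := by linarith
  exact lt_of_mul_lt_mul_left hmain hA.le

theorem abs_X_lt_of_cone (hσ : 0 < σ) (hβ0 : β 0 = 0)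
    (hβ : ∀ r ∈ Icc (0 : ℝ) t, ∀ s ∈ Icc (0 : ℝ) t, |β s - β r| ≤ σ * √|s - r|)
    (hc : π * σ * √(1 + c ^ 2) ≤ 8 * c) (hs : s ∈ Ioc 0 t)
    (hcone : ∀ r ∈ Ioo 0 s, |X r| ≤ c * Y r) : |X s| < c * Y s := by
  refine abs_lt.mpr ⟨?_, hflow.X_lt_of_cone hσ hβ0 hβ hc hs hcone⟩
  have hneg := hflow.neg.X_lt_of_cone hσ (by simp [hβ0])
    (fun r hr s hs => by simpa only [Pi.neg_apply, neg_sub_neg, abs_sub_comm] using hβ r hr s hs)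
    hc hs (fun r hr => by simpa only [Pi.neg_apply, abs_neg] using hcone r hr)
  simp only [Pi.neg_apply] at hneg
  linarith

end IsReverseLoewnerFlow

theorem mul_sqrt_one_add_sq_div_sqrt {a : ℝ} (ha : a ^ 2 < 64) :
    a * √(1 + (a / √(64 - a ^ 2)) ^ 2) = 8 * (a / √(64 - a ^ 2)) := by
  have hpos : 0 < 64 - a ^ 2 := by linarith
  have hsq : 1 + (a / √(64 - a ^ 2)) ^ 2 = (8 / √(64 - a ^ 2)) ^ 2 := by
    rw [div_pow, div_pow, sq_sqrt hpos.le]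
    field_simp
    ring
  rw [hsq, sqrt_sq (by positivity)]
  ring

theorem reverse_flow_cone_bound_small_sigma_general
    (σ t : ℝ) (hσ0 : 0 < σ)
    (β : ℝ → ℝ) (hβcont : ContinuousOn β (Icc 0 t)) (hβ0 : β 0 = 0)
    (hβlip : ∀ r ∈ Icc (0 : ℝ) t, ∀ s ∈ Icc (0 : ℝ) t, |β s - β r| ≤ σ * Real.sqrt |s - r|)
    (y : ℝ)
    (X Y : ℝ → ℝ)
    (hXcont : ContinuousOn X (Icc 0 t)) (hYcont : ContinuousOn Y (Icc 0 t))
    (hYpos : ∀ s ∈ Icc (0 : ℝ) t, 0 < Y s)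
    (hX : ∀ s ∈ Icc (0 : ℝ) t,
      X s = β s - ∫ r in (0 : ℝ)..s, 2 * X r / (X r ^ 2 + Y r ^ 2))
    (hY : ∀ s ∈ Icc (0 : ℝ) t,
      Y s = y + ∫ r in (0 : ℝ)..s, 2 * Y r / (X r ^ 2 + Y r ^ 2))
    (hσ : σ < 8 / Real.pi) :
    ∀ s ∈ Icc (0 : ℝ) t,
      |X s| ≤ Real.pi * σ / Real.sqrt (64 - Real.pi ^ 2 * σ ^ 2) * Y s := by
  have hflow : IsReverseLoewnerFlow t y β X Y := ⟨hβcont, hXcont, hYcont, hYpos, hX, hY⟩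
  have hπσ : (π * σ) ^ 2 < 64 := by
    have := (lt_div_iff₀ pi_pos).1 hσ
    nlinarith [mul_pos pi_pos hσ0]
  have hslope := mul_sqrt_one_add_sq_div_sqrt hπσ
  rw [mul_pow] at hslope hπσ
  have hc : 0 < π * σ / √(64 - π ^ 2 * σ ^ 2) :=
    div_pos (mul_pos pi_pos hσ0) (sqrt_pos.2 (by linarith))
  intro s hs
  have h0 : (0 : ℝ) ∈ Icc 0 t := ⟨le_rfl, hs.1.trans hs.2⟩
  refine (forall_lt_of_forall_Ioo_lt hXcont.abs (continuousOn_const.mul hYcont) ?_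
    (fun s hs hcone => hflow.abs_X_lt_of_cone hσ0 hβ0 hβlip hslope.le hs
      fun r hr => (hcone r hr).le) s hs).le
  rw [hflow.X_zero h0.2, hβ0, abs_zero]
  exact mul_pos hc (hYpos 0 h0)

/-- Cone bound for the reverse Loewner flow in the range `0 < σ < 8/π`:
`|X(s)| ≤ (πσ/√(64 − π²σ²))·Y(s)`. -/
theorem reverse_flow_cone_bound_small_sigma
    (σ t : ℝ) (hσ0 : 0 < σ) (ht : 0 < t)
    (β : ℝ → ℝ) (hβcont : ContinuousOn β (Icc 0 t)) (hβ0 : β 0 = 0)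
    (hβlip : ∀ r ∈ Icc (0 : ℝ) t, ∀ s ∈ Icc (0 : ℝ) t, |β s - β r| ≤ σ * Real.sqrt |s - r|)
    (y : ℝ) (hy : 0 < y)
    (X Y : ℝ → ℝ)
    (hXcont : ContinuousOn X (Icc 0 t)) (hYcont : ContinuousOn Y (Icc 0 t))
    (hYpos : ∀ s ∈ Icc (0 : ℝ) t, 0 < Y s)
    (hX : ∀ s ∈ Icc (0 : ℝ) t,
      X s = β s - ∫ r in (0 : ℝ)..s, 2 * X r / (X r ^ 2 + Y r ^ 2))
    (hY : ∀ s ∈ Icc (0 : ℝ) t,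
      Y s = y + ∫ r in (0 : ℝ)..s, 2 * Y r / (X r ^ 2 + Y r ^ 2))
    (hσ : σ < 8 / Real.pi) :
    ∀ s ∈ Icc (0 : ℝ) t,
      |X s| ≤ Real.pi * σ / Real.sqrt (64 - Real.pi ^ 2 * σ ^ 2) * Y s :=
  reverse_flow_cone_bound_small_sigma_general σ t hσ0 β hβcont hβ0 hβlip y X Y hXcont hYcont hYpos
    hX hY hσ
end

section
/- For 0 < σ < 4 let p(σ) denote the unique x ∈ (σ/(4−σ), ∞) satisfying e^x = √(16−σ²)/√(16x² − σ²(x+1)²), and set L(σ) = σ·(1+p(σ))·e^{p(σ)}/√(16−σ²). Let ω be the unique positive real number with ω·e^ω = 1. Then lim_{σ→0⁺} L(σ)/σ = (1/4)·(1 + 1/ω). -/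
/-!
Squaring the equation defining `x = p(σ)` gives `16((x eˣ)² - 1) = σ²(((x + 1) eˣ)² - 1)`.
For `x ≥ 0` the right side is nonnegative, so `x eˣ ≥ 1 = ω e^ω` and hence `x ≥ ω`. Then
`(x + 1) eˣ ≤ (1 + 1/ω) x eˣ`, which bounds `x eˣ - 1`, and with it `x - ω`, by `O(σ²)`.
So `p(σ) → ω`, and `L(σ)/σ = (1 + p(σ)) e^{p(σ)} / √(16 - σ²) → (1 + ω) e^ω / 4 = (1 + 1/ω) / 4`.
-/

open Set Filter Real Topology

lemma sub_le_mul_exp_sub_mul_exp {a b : ℝ} (ha : 0 ≤ a) (hab : a ≤ b) :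
    b - a ≤ b * exp b - a * exp a := by
  nlinarith [exp_le_exp.2 hab, one_le_exp (ha.trans hab)]

lemma sq_exp_mul_eq_of_exp_eq_sqrt_div_sqrt {x A D : ℝ} (h : exp x = √A / √D) :
    exp x ^ 2 * D = A := by
  -- `√` vanishes on negative numbers, so `0 < exp x` already forces `0 ≤ A` and `0 < D`.
  have hpos : 0 < √A / √D := h ▸ exp_pos x
  have hA : 0 ≤ A := by
    by_contra! hA
    simp [sqrt_eq_zero'.2 hA.le] at hpos
  have hD : 0 < D := by
    by_contra! hD
    simp [sqrt_eq_zero'.2 hD] at hpos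
  rw [h, div_pow, sq_sqrt hA, sq_sqrt hD.le, div_mul_cancel₀ _ hD.ne']

def ConeEq (σ x : ℝ) : Prop :=
  16 * ((x * exp x) ^ 2 - 1) = σ ^ 2 * (((x + 1) * exp x) ^ 2 - 1)

lemma coneEq_of_exp_eq {σ x : ℝ}
    (h : exp x = √(16 - σ ^ 2) / √(16 * x ^ 2 - σ ^ 2 * (x + 1) ^ 2)) : ConeEq σ x := by
  unfold ConeEq
  linear_combination sq_exp_mul_eq_of_exp_eq_sqrt_div_sqrt h

namespace ConeEq

variable {σ x ω : ℝ}

lemma one_le_mul_exp (hid : ConeEq σ x) (hx : 0 ≤ x) : 1 ≤ x * exp x := by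
  unfold ConeEq at hid
  have hh : 1 ≤ ((x + 1) * exp x) ^ 2 :=
    one_le_pow₀ (one_le_mul_of_one_le_of_one_le (by linarith) (one_le_exp hx))
  nlinarith [mul_nonneg (sq_nonneg σ) (sub_nonneg.2 hh), mul_nonneg hx (exp_pos x).le]

lemma le_and_sub_le (hid : ConeEq σ x) (hx : 0 ≤ x) (hω_pos : 0 < ω) (hω : ω * exp ω = 1)
    (hσ : (1 + 1 / ω) ^ 2 * σ ^ 2 < 16) :
    ω ≤ x ∧ x - ω ≤ (1 + 1 / ω) ^ 2 * σ ^ 2 / (16 - (1 + 1 / ω) ^ 2 * σ ^ 2) := by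
  have hg : 1 ≤ x * exp x := hid.one_le_mul_exp hx
  unfold ConeEq at hid
  set g := x * exp x
  set K := (1 + 1 / ω) ^ 2 * σ ^ 2
  have hωx : ω ≤ x := by
    by_contra! hxω
    linarith [sub_le_mul_exp_sub_mul_exp hx hxω.le]
  have hxg : x - ω ≤ g - 1 := hω ▸ sub_le_mul_exp_sub_mul_exp hω_pos.le hωx
  have hh : (x + 1) * exp x ≤ (1 + 1 / ω) * g := by
    have : 1 ≤ x / ω := (one_le_div hω_pos).2 hωx
    have : x + 1 ≤ (1 + 1 / ω) * x := by linarith [show (1 + 1 / ω) * x = x + x / ω by ring]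
    simpa only [g, mul_assoc] using mul_le_mul_of_nonneg_right this (exp_pos x).le
  have hh2 : ((x + 1) * exp x) ^ 2 ≤ (1 + 1 / ω) ^ 2 * g ^ 2 := by
    rw [← mul_pow]; exact pow_le_pow_left₀ (by positivity) hh 2
  have hgK : (g ^ 2 - 1) * (16 - K) ≤ K := by
    nlinarith [mul_le_mul_of_nonneg_left hh2 (sq_nonneg σ)]
  have hg2 : g - 1 ≤ g ^ 2 - 1 := by nlinarith
  refine ⟨hωx, (le_div_iff₀ (by linarith)).2 ?_⟩
  exact (mul_le_mul_of_nonneg_right (hxg.trans hg2) (by linarith)).trans hgK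

end ConeEq

lemma tendsto_of_coneEq {α : Type*} {l : Filter α} {σ x : α → ℝ} {ω : ℝ}
    (hω_pos : 0 < ω) (hω : ω * exp ω = 1) (hσ : Tendsto σ l (𝓝 0))
    (h : ∀ᶠ a in l, 0 ≤ x a ∧ ConeEq (σ a) (x a)) :
    Tendsto x l (𝓝 ω) := by
  set c := (1 + 1 / ω) ^ 2
  have hK : Tendsto (fun a ↦ c * σ a ^ 2) l (𝓝 0) := by simpa using (hσ.pow 2).const_mul c
  have hbounds : ∀ᶠ a in l, ω ≤ x a ∧ x a ≤ ω + c * σ a ^ 2 / (16 - c * σ a ^ 2) := by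
    filter_upwards [h, hK.eventually (eventually_lt_nhds (by norm_num : (0 : ℝ) < 16))]
      with a ⟨hx, hid⟩ hsmall
    obtain ⟨hωx, hxω⟩ := hid.le_and_sub_le hx hω_pos hω hsmall
    exact ⟨hωx, by linarith⟩
  have hup : Tendsto (fun a ↦ ω + c * σ a ^ 2 / (16 - c * σ a ^ 2)) l (𝓝 ω) := by
    simpa using tendsto_const_nhds.add (hK.div (tendsto_const_nhds.sub hK) (by norm_num))
  exact tendsto_of_tendsto_of_tendsto_of_le_of_le' tendsto_const_nhds hup
    (hbounds.mono fun _ ↦ And.left) (hbounds.mono fun _ ↦ And.right)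

/-- Asymptotics of the cone constant: with `p(σ)` the unique solution in `(σ/(4−σ), ∞)` of
`e^x = √(16−σ²)/√(16x² − σ²(x+1)²)` and `L(σ) = σ(1+p(σ))e^{p(σ)}/√(16−σ²)`, we have
`L(σ)/σ → (1/4)(1 + 1/W(1))` as `σ → 0⁺`, where `W(1)` is the unique positive root of
`ω·e^ω = 1`. -/
theorem L_sigma_asymptotics
    (p : ℝ → ℝ)
    (hp : ∀ σ ∈ Ioo (0 : ℝ) 4, p σ ∈ Ioi (σ / (4 - σ)) ∧
      Real.exp (p σ) =
        Real.sqrt (16 - σ ^ 2) / Real.sqrt (16 * (p σ) ^ 2 - σ ^ 2 * (p σ + 1) ^ 2))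
    (ω : ℝ) (hω_pos : 0 < ω) (hω : ω * Real.exp ω = 1) :
    Tendsto (fun σ : ℝ =>
        (σ * (1 + p σ) * Real.exp (p σ) / Real.sqrt (16 - σ ^ 2)) / σ)
      (nhdsWithin 0 (Ioi (0 : ℝ))) (nhds (1 / 4 * (1 + 1 / ω))) := by
  have hp_lim : Tendsto p (𝓝[>] 0) (𝓝 ω) := by
    refine tendsto_of_coneEq hω_pos hω nhdsWithin_le_nhds ?_
    filter_upwards [Ioo_mem_nhdsGT (by norm_num : (0 : ℝ) < 4)] with σ hσ
    exact ⟨(div_pos hσ.1 (by linarith [hσ.2])).le.trans (hp σ hσ).1.le,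
      coneEq_of_exp_eq (hp σ hσ).2⟩
  have hsqrt : Tendsto (fun σ : ℝ ↦ √(16 - σ ^ 2)) (𝓝[>] 0) (𝓝 4) := by
    have : √(16 - (0 : ℝ) ^ 2) = 4 := by norm_num
    exact this ▸ (tendsto_const_nhds.sub (tendsto_id.pow 2)).sqrt.mono_left nhdsWithin_le_nhds
  have hL : Tendsto (fun σ ↦ (1 + p σ) * exp (p σ) / √(16 - σ ^ 2)) (𝓝[>] 0)
      (𝓝 ((1 + ω) * exp ω / 4)) :=
    ((tendsto_const_nhds.add hp_lim).mul hp_lim.rexp).div hsqrt (by norm_num)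
  have hval : (1 + ω) * exp ω / 4 = 1 / 4 * (1 + 1 / ω) := by
    rw [eq_div_of_mul_eq hω_pos.ne' ((mul_comm _ _).trans hω)]; field_simp; ring
  rw [← hval]
  refine hL.congr' ?_
  filter_upwards [self_mem_nhdsWithin] with σ (hσ : 0 < σ)
  field_simp
end

section
/- Let t > 0, let λ : [0,t] → ℝ be continuous, and let z ∈ ℂ. Let g : [0,t] → ℂ be a continuous function with g(s) ≠ λ(s) for all s ∈ [0,t], satisfying g(s) = g(0) + ∫₀ˢ 2/(g(r) − λ(r)) dr for all s ∈ [0,t], and suppose g(t) = z + λ(t). Define h : [0,t] → ℂ by h(s) = g(t−s) − λ(t−s). Then h(s) ≠ 0 for all s, and h(s) = z + (λ(t) − λ(t−s)) − ∫₀ˢ 2/h(r) dr for all s ∈ [0,t]. -/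
open Set MeasureTheory intervalIntegral

/-- Reverse-flow identity for the Loewner equation: if `g` solves the forward Loewner ODE
`dg/ds = 2/(g − λ(s))` with `g(t) = z + λ(t)`, then `h(s) = g(t−s) − λ(t−s)` is nonvanishing
and solves the reverse Loewner equation `h(s) = z + (λ(t) − λ(t−s)) − ∫₀ˢ 2/h(r) dr`. -/
theorem reverse_loewner_flow_identity
    (t : ℝ) (ht : 0 < t)
    (lam : ℝ → ℝ) (hlam : ContinuousOn lam (Icc 0 t))
    (z : ℂ)
    (g : ℝ → ℂ) (hgcont : ContinuousOn g (Icc 0 t))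
    (hgne : ∀ s ∈ Icc (0 : ℝ) t, g s ≠ (lam s : ℂ))
    (hg : ∀ s ∈ Icc (0 : ℝ) t,
      g s = g 0 + ∫ r in (0 : ℝ)..s, 2 / (g r - (lam r : ℂ)))
    (hgt : g t = z + (lam t : ℂ))
    (h : ℝ → ℂ) (hh : ∀ s : ℝ, h s = g (t - s) - (lam (t - s) : ℂ)) :
    ∀ s ∈ Icc (0 : ℝ) t, h s ≠ 0 ∧
      h s = z + ((lam t - lam (t - s) : ℝ) : ℂ) - ∫ r in (0 : ℝ)..s, 2 / h r := by
  intro s hs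
  have hts : t - s ∈ Icc (0 : ℝ) t := ⟨by linarith [hs.2], by linarith [hs.1]⟩
  have hne : h s ≠ 0 := by
    rw [hh]; exact sub_ne_zero.mpr (hgne _ hts)
  refine ⟨hne, ?_⟩
  set f : ℝ → ℂ := fun r => 2 / (g r - (lam r : ℂ)) with hfdef
  have hfcont : ContinuousOn f (Icc 0 t) := by
    apply continuousOn_const.div
      (hgcont.sub (Complex.continuous_ofReal.comp_continuousOn hlam))
    intro r hr; exact sub_ne_zero.mpr (hgne r hr)
  have hint : ∀ a b, a ∈ Icc (0:ℝ) t → b ∈ Icc (0:ℝ) t →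
      IntervalIntegrable f volume a b := fun a b ha hb =>
    (hfcont.mono (uIcc_subset_Icc ha hb)).intervalIntegrable
  have hsub : (∫ r in (0:ℝ)..s, 2 / h r) = ∫ u in (t-s)..t, f u := by
    have h1 : (∫ r in (0:ℝ)..s, 2 / h r) = ∫ r in (0:ℝ)..s, f (t - r) := by
      congr 1; ext r; rw [hh]
    rw [h1, intervalIntegral.integral_comp_sub_left f t, sub_zero]
  have hadj : (∫ u in (0:ℝ)..(t-s), f u) + ∫ u in (t-s)..t, f u
      = ∫ u in (0:ℝ)..t, f u :=
    intervalIntegral.integral_add_adjacent_intervals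
      (hint _ _ ⟨le_refl 0, le_of_lt ht⟩ hts) (hint _ _ hts ⟨le_of_lt ht, le_refl t⟩)
  have hgt' := hg t ⟨le_of_lt ht, le_refl t⟩
  have hgts := hg (t - s) hts
  rw [hh, hsub, hgts]
  have hg0 : g 0 = z + (lam t : ℂ) - ∫ u in (0:ℝ)..t, f u := by
    rw [← hgt, hgt']; ring
  rw [hg0]
  push_cast
  linear_combination hadj
end

section
/- Assume the reverse Loewner flow setup. Then: (a) Y is nondecreasing on [0,t] and Y(s) ≤ √(y² + 4s) for all s ∈ [0,t]; and (b) |X(s)| ≤ sup_{0 ≤ r ≤ s} |β(s) − β(r)| for all s ∈ [0,t]. -/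
open Set MeasureTheory intervalIntegral Real

/-- Auxiliary lemma: a one-sided bound on `X` for the reverse Loewner flow. -/
private lemma reverse_flow_X_le
    (t : ℝ) (ht : 0 < t) (β X Y : ℝ → ℝ) (hβ0 : β 0 = 0)
    (hXcont : ContinuousOn X (Icc 0 t)) (hYcont : ContinuousOn Y (Icc 0 t))
    (hYpos : ∀ s ∈ Icc (0 : ℝ) t, 0 < Y s)
    (hX : ∀ s ∈ Icc (0 : ℝ) t,
      X s = β s - ∫ r in (0 : ℝ)..s, 2 * X r / (X r ^ 2 + Y r ^ 2))
    (s : ℝ) (hs : s ∈ Icc (0 : ℝ) t)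
    (M : ℝ) (hM0 : 0 ≤ M) (hMle : ∀ r ∈ Icc (0 : ℝ) s, β s - β r ≤ M) :
    X s ≤ M := by
  obtain ⟨hs0, hst⟩ := hs
  have hD : ∀ r ∈ Icc (0 : ℝ) t, (0 : ℝ) < X r ^ 2 + Y r ^ 2 := fun r hr =>
    add_pos_of_nonneg_of_pos (sq_nonneg _) (pow_pos (hYpos r hr) 2)
  have hgcont : ContinuousOn (fun r => 2 * X r / (X r ^ 2 + Y r ^ 2)) (Icc 0 t) :=
    (continuousOn_const.mul hXcont).div ((hXcont.pow 2).add (hYcont.pow 2))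
      (fun r hr => (hD r hr).ne')
  have hgint : ∀ a ∈ Icc (0 : ℝ) t, ∀ b ∈ Icc (0 : ℝ) t,
      IntervalIntegrable (fun r => 2 * X r / (X r ^ 2 + Y r ^ 2)) volume a b :=
    fun a ha b hb => (hgcont.mono (uIcc_subset_Icc ha hb)).intervalIntegrable
  have hX0 : X 0 = 0 := by
    have h := hX 0 ⟨le_rfl, ht.le⟩
    simpa [hβ0] using h
  by_cases hXs : X s ≤ 0
  · exact hXs.trans hM0
  push_neg at hXs
  -- the set of times `r ≤ s` with `X r ≤ 0`
  set A : Set ℝ := {r | r ∈ Icc (0 : ℝ) s ∧ X r ≤ 0} with hA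
  have hAne : A.Nonempty := ⟨0, ⟨le_rfl, hs0⟩, hX0.le⟩
  have hAbdd : BddAbove A := ⟨s, fun r hr => hr.1.2⟩
  have hsub : Icc (0 : ℝ) s ⊆ Icc 0 t := Icc_subset_Icc le_rfl hst
  have hAclosed : IsClosed A := by
    have h1 : IsClosed (Icc (0 : ℝ) t ∩ X ⁻¹' Iic 0) :=
      hXcont.preimage_isClosed_of_isClosed isClosed_Icc isClosed_Iic
    have h2 : A = Icc (0 : ℝ) s ∩ (Icc (0 : ℝ) t ∩ X ⁻¹' Iic 0) := by
      ext r
      constructor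
      · rintro ⟨hr1, hr2⟩
        exact ⟨hr1, hsub hr1, hr2⟩
      · rintro ⟨hr1, _, hr3⟩
        exact ⟨hr1, hr3⟩
    rw [h2]
    exact isClosed_Icc.inter h1
  set r0 := sSup A with hr0def
  have hr0A : r0 ∈ A := hAclosed.csSup_mem hAne hAbdd
  obtain ⟨⟨hr00, hr0s⟩, hr0X⟩ := hr0A
  have hr0lt : r0 < s := by
    rcases lt_or_eq_of_le hr0s with h | h
    · exact h
    · rw [h] at hr0X; linarith
  have hpos : ∀ r ∈ Ioc r0 s, 0 < X r := by
    intro r hr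
    by_contra h
    push_neg at h
    have : r ∈ A := ⟨⟨hr00.trans hr.1.le, hr.2⟩, h⟩
    exact absurd (le_csSup hAbdd this) (not_le.mpr hr.1)
  have hXr0 : 0 ≤ X r0 := by
    have hmem : r0 ∈ Icc (0 : ℝ) t := ⟨hr00, hr0s.trans hst⟩
    have htend : Filter.Tendsto X (nhdsWithin r0 (Ioc r0 s)) (nhds (X r0)) :=
      (hXcont r0 hmem).mono_left
        (nhdsWithin_mono _ (fun r hr => ⟨hr00.trans hr.1.le, hr.2.trans hst⟩))
    haveI : (nhdsWithin r0 (Ioc r0 s)).NeBot := by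
      apply mem_closure_iff_nhdsWithin_neBot.mp
      rw [closure_Ioc hr0lt.ne]
      exact ⟨le_rfl, hr0lt.le⟩
    exact ge_of_tendsto htend (eventually_mem_nhdsWithin.mono (fun r hr => (hpos r hr).le))
  have hInn : 0 ≤ ∫ r in r0..s, 2 * X r / (X r ^ 2 + Y r ^ 2) := by
    apply intervalIntegral.integral_nonneg hr0lt.le
    intro u hu
    have hXu : 0 ≤ X u := by
      rcases eq_or_lt_of_le hu.1 with h | h
      · rw [← h]; exact hXr0
      · exact (hpos u ⟨h, hu.2⟩).le
    have hDu : (0 : ℝ) ≤ X u ^ 2 + Y u ^ 2 := add_nonneg (sq_nonneg _) (sq_nonneg _)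
    exact div_nonneg (by linarith) hDu
  have hsplit : (∫ r in (0 : ℝ)..s, 2 * X r / (X r ^ 2 + Y r ^ 2)) -
      (∫ r in (0 : ℝ)..r0, 2 * X r / (X r ^ 2 + Y r ^ 2)) =
      ∫ r in r0..s, 2 * X r / (X r ^ 2 + Y r ^ 2) :=
    integral_interval_sub_left (hgint 0 ⟨le_rfl, ht.le⟩ s ⟨hs0, hst⟩)
      (hgint 0 ⟨le_rfl, ht.le⟩ r0 ⟨hr00, hr0s.trans hst⟩)
  have h1 := hX s ⟨hs0, hst⟩
  have h2 := hX r0 ⟨hr00, hr0s.trans hst⟩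
  have hble := hMle r0 ⟨hr00, hr0s⟩
  linarith

/-- Basic bounds for the reverse Loewner flow: `Y` is nondecreasing with
`Y(s) ≤ √(y² + 4s)`, and `|X(s)| ≤ sup_{0 ≤ r ≤ s} |β(s) − β(r)|`. -/
theorem reverse_flow_basic_bounds
    (σ t : ℝ) (hσ0 : 0 < σ) (ht : 0 < t)
    (β : ℝ → ℝ) (hβcont : ContinuousOn β (Icc 0 t)) (hβ0 : β 0 = 0)
    (hβlip : ∀ r ∈ Icc (0 : ℝ) t, ∀ s ∈ Icc (0 : ℝ) t, |β s - β r| ≤ σ * Real.sqrt |s - r|)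
    (y : ℝ) (hy : 0 < y)
    (X Y : ℝ → ℝ)
    (hXcont : ContinuousOn X (Icc 0 t)) (hYcont : ContinuousOn Y (Icc 0 t))
    (hYpos : ∀ s ∈ Icc (0 : ℝ) t, 0 < Y s)
    (hX : ∀ s ∈ Icc (0 : ℝ) t,
      X s = β s - ∫ r in (0 : ℝ)..s, 2 * X r / (X r ^ 2 + Y r ^ 2))
    (hY : ∀ s ∈ Icc (0 : ℝ) t,
      Y s = y + ∫ r in (0 : ℝ)..s, 2 * Y r / (X r ^ 2 + Y r ^ 2))
    : MonotoneOn Y (Icc (0 : ℝ) t) ∧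
      (∀ s ∈ Icc (0 : ℝ) t, Y s ≤ Real.sqrt (y ^ 2 + 4 * s)) ∧
      ∀ s ∈ Icc (0 : ℝ) t,
        |X s| ≤ sSup ((fun r => |β s - β r|) '' Icc (0 : ℝ) s) := by
  have hD : ∀ r ∈ Icc (0 : ℝ) t, (0 : ℝ) < X r ^ 2 + Y r ^ 2 := fun r hr =>
    add_pos_of_nonneg_of_pos (sq_nonneg _) (pow_pos (hYpos r hr) 2)
  have hfcont : ContinuousOn (fun r => 2 * Y r / (X r ^ 2 + Y r ^ 2)) (Icc 0 t) :=
    (continuousOn_const.mul hYcont).div ((hXcont.pow 2).add (hYcont.pow 2))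
      (fun r hr => (hD r hr).ne')
  have hfint : ∀ a ∈ Icc (0 : ℝ) t, ∀ b ∈ Icc (0 : ℝ) t,
      IntervalIntegrable (fun r => 2 * Y r / (X r ^ 2 + Y r ^ 2)) volume a b :=
    fun a ha b hb => (hfcont.mono (uIcc_subset_Icc ha hb)).intervalIntegrable
  -- monotonicity of Y
  have hmono : MonotoneOn Y (Icc (0 : ℝ) t) := by
    intro a ha b hb hab
    have hsplit : (∫ r in (0 : ℝ)..b, 2 * Y r / (X r ^ 2 + Y r ^ 2)) -
        (∫ r in (0 : ℝ)..a, 2 * Y r / (X r ^ 2 + Y r ^ 2)) =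
        ∫ r in a..b, 2 * Y r / (X r ^ 2 + Y r ^ 2) :=
      integral_interval_sub_left (hfint 0 ⟨le_rfl, ht.le⟩ b hb) (hfint 0 ⟨le_rfl, ht.le⟩ a ha)
    have hnn : 0 ≤ ∫ r in a..b, 2 * Y r / (X r ^ 2 + Y r ^ 2) := by
      apply intervalIntegral.integral_nonneg hab
      intro u hu
      have hu' : u ∈ Icc (0 : ℝ) t := ⟨ha.1.trans hu.1, hu.2.trans hb.2⟩
      exact div_nonneg (by linarith [hYpos u hu']) (hD u hu').le
    have h1 := hY a ha
    have h2 := hY b hb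
    linarith
  refine ⟨hmono, ?_, ?_⟩
  · -- Y s ≤ sqrt (y^2 + 4 s)
    intro s hs
    have hderiv : ∀ x ∈ Icc (0 : ℝ) t,
        HasDerivWithinAt Y (2 * Y x / (X x ^ 2 + Y x ^ 2)) (Icc (0 : ℝ) t) x := by
      intro x hx
      haveI : Fact (x ∈ Icc (0 : ℝ) t) := ⟨hx⟩
      have h := intervalIntegral.integral_hasDerivWithinAt_right (s := Icc (0:ℝ) t)
        (hfint 0 ⟨le_rfl, ht.le⟩ x hx)
        (hfcont.stronglyMeasurableAtFilter_nhdsWithin measurableSet_Icc x)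
        (hfcont x hx)
      exact (h.const_add y).congr (fun u hu => hY u hu) (hY x hx)
    have hsqderiv : ∀ x ∈ Icc (0 : ℝ) t,
        HasDerivWithinAt (fun u => Y u ^ 2)
          ((2 : ℕ) * Y x ^ 1 * (2 * Y x / (X x ^ 2 + Y x ^ 2))) (Icc (0 : ℝ) t) x :=
      fun x hx => (hderiv x hx).pow 2
    have hbound : ∀ x ∈ Icc (0 : ℝ) t,
        ‖(2 : ℕ) * Y x ^ 1 * (2 * Y x / (X x ^ 2 + Y x ^ 2))‖ ≤ 4 := by
      intro x hx
      have hDx := hD x hx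
      have hval : ((2 : ℕ) : ℝ) * Y x ^ 1 * (2 * Y x / (X x ^ 2 + Y x ^ 2)) =
          4 * Y x ^ 2 / (X x ^ 2 + Y x ^ 2) := by
        rw [pow_one]; ring
      rw [hval, Real.norm_eq_abs, abs_of_nonneg (by positivity), div_le_iff₀ hDx]
      nlinarith [sq_nonneg (X x)]
    have hmvt := (convex_Icc (0 : ℝ) t).norm_image_sub_le_of_norm_hasDerivWithin_le
      hsqderiv hbound ⟨le_rfl, ht.le⟩ hs
    have hY0 : Y 0 = y := by
      have h := hY 0 ⟨le_rfl, ht.le⟩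
      simpa using h
    rw [Real.norm_eq_abs, Real.norm_eq_abs, hY0] at hmvt
    have hs0 : (0 : ℝ) ≤ s := hs.1
    have h2 : Y s ^ 2 ≤ y ^ 2 + 4 * s := by
      have := (abs_le.mp hmvt).2
      rw [abs_of_nonneg (by simpa using hs0)] at this
      simp only [sub_zero] at this
      linarith
    calc Y s = Real.sqrt (Y s ^ 2) := by rw [Real.sqrt_sq (hYpos s hs).le]
      _ ≤ Real.sqrt (y ^ 2 + 4 * s) := Real.sqrt_le_sqrt h2
  · -- |X s| ≤ sSup ...
    intro s hs
    set M := sSup ((fun r => |β s - β r|) '' Icc (0 : ℝ) s) with hM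
    have hsub : Icc (0 : ℝ) s ⊆ Icc 0 t := Icc_subset_Icc le_rfl hs.2
    have hbdd : BddAbove ((fun r => |β s - β r|) '' Icc (0 : ℝ) s) :=
      (isCompact_Icc.image_of_continuousOn
        ((continuousOn_const.sub (hβcont.mono hsub)).abs)).bddAbove
    have hMle : ∀ r ∈ Icc (0 : ℝ) s, |β s - β r| ≤ M :=
      fun r hr => le_csSup hbdd (mem_image_of_mem _ hr)
    have hM0 : 0 ≤ M := by
      have := hMle s ⟨hs.1, le_rfl⟩
      simpa using this
    rw [abs_le]
    constructor
    · -- -M ≤ X s, via the flow for (-β, -X)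
      have hX' : ∀ u ∈ Icc (0 : ℝ) t,
          (fun r => -X r) u = (fun r => -β r) u -
            ∫ r in (0 : ℝ)..u, 2 * (-X r) / ((-X r) ^ 2 + Y r ^ 2) := by
        intro u hu
        have h := hX u hu
        have hint : (∫ r in (0 : ℝ)..u, 2 * (-X r) / ((-X r) ^ 2 + Y r ^ 2)) =
            - ∫ r in (0 : ℝ)..u, 2 * X r / (X r ^ 2 + Y r ^ 2) := by
          rw [← intervalIntegral.integral_neg]
          congr 1
          funext r
          rw [neg_sq]
          ring
        simp only [hint]
        linarith
      have h := reverse_flow_X_le t ht (fun r => -β r) (fun r => -X r) Y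
        (by simp [hβ0]) hXcont.neg hYcont hYpos hX' s hs M hM0
        (fun r hr => by
          have h1 := hMle r hr
          have h2 : -(β s - β r) ≤ |β s - β r| := neg_le_abs _
          linarith)
      linarith
    · exact reverse_flow_X_le t ht β X Y hβ0 hXcont hYcont hYpos hX s hs M hM0
        (fun r hr => (le_abs_self _).trans (hMle r hr))
end

section
/- Assume the reverse Loewner flow setup. Then Y is strictly increasing on [0,t], the map s ↦ Y(s)² − y² is a continuous strictly increasing bijection from [0,t] onto [0, Y(t)² − y²], and its inverse function θ : [0, Y(t)² − y²] → [0,t] satisfies θ(u) = (1/4)·∫₀ᵘ ( X(θ(v))²/(y² + v) + 1 ) dv for all u ∈ [0, Y(t)² − y²]. -/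
open Set MeasureTheory intervalIntegral Real
open scoped Interval

/-! The velocity `Y' = 2Y/(X² + Y²)` is positive, so `g = Y² − y²` is strictly increasing with
derivative `g' = 4Y²/(X² + Y²) > 0`. Its inverse `θ` is the primitive of `1/g'(θ)`, which is
`(X(θ)² + Y(θ)²)/(4Y(θ)²)` with `Y(θ(u))² = y² + u`. The primitive is obtained by substituting
`v = g(s)`; since `g` is monotone, the substitution needs no regularity of the integrand, so
the continuity of `θ` never enters. -/

theorem ContinuousOn.bijOn_Icc_of_strictMonoOn {f : ℝ → ℝ} {a b : ℝ} (hab : a ≤ b)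
    (hf : ContinuousOn f (Icc a b)) (hmono : StrictMonoOn f (Icc a b)) :
    BijOn f (Icc a b) (Icc (f a) (f b)) :=
  ⟨hmono.monotoneOn.mapsTo_Icc, hmono.injOn,
    hf.surjOn_Icc (left_mem_Icc.2 hab) (right_mem_Icc.2 hab)⟩

theorem hasDerivAt_of_eq_add_integral {f F : ℝ → ℝ} {a b c x : ℝ}
    (hf : ContinuousOn f (Icc a b)) (hF : ∀ s ∈ Icc a b, F s = c + ∫ r in a..s, f r)
    (hx : x ∈ Ioo a b) : HasDerivAt F (f x) x := by
  have hnhds : Icc a b ∈ nhds x := Icc_mem_nhds hx.1 hx.2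
  have hint : IntervalIntegrable f volume a x :=
    (hf.mono (Icc_subset_Icc_right hx.2.le)).intervalIntegrable_of_Icc hx.1.le
  have hderiv : HasDerivAt (fun s => ∫ r in a..s, f r) (f x) x :=
    integral_hasDerivAt_right hint
      ((hf.mono Ioo_subset_Icc_self).stronglyMeasurableAtFilter isOpen_Ioo x hx)
      (hf.continuousAt hnhds)
  exact (hderiv.const_add c).congr_of_eventuallyEq (Filter.eventuallyEq_of_mem hnhds hF)

theorem strictMonoOn_Icc_of_hasDerivAt_pos {f f' : ℝ → ℝ} {a b : ℝ}
    (hf : ContinuousOn f (Icc a b)) (hff' : ∀ x ∈ Ioo a b, HasDerivAt f (f' x) x)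
    (hf'pos : ∀ x ∈ Ioo a b, 0 < f' x) : StrictMonoOn f (Icc a b) :=
  strictMonoOn_of_hasDerivWithinAt_pos (convex_Icc a b) hf
    (fun x hx => (hff' x (by simpa using hx)).hasDerivWithinAt)
    fun x hx => hf'pos x (by simpa using hx)

theorem integral_inv_deriv_comp_of_leftInvOn {g g' θ : ℝ → ℝ} {a b : ℝ}
    (hg : ContinuousOn g [[a, b]]) (hgg' : ∀ x ∈ Ioo (min a b) (max a b), HasDerivAt g (g' x) x)
    (hg'pos : ∀ x ∈ [[a, b]], 0 < g' x) (hθ : LeftInvOn θ g [[a, b]]) :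
    ∫ v in g a..g b, (g' (θ v))⁻¹ = b - a := by
  have hIoo : Ioo (min a b) (max a b) ⊆ [[a, b]] := Ioo_subset_Icc_self
  calc ∫ v in g a..g b, (g' (θ v))⁻¹
      = ∫ x in a..b, g' x • (g' (θ (g x)))⁻¹ :=
        (integral_deriv_smul_comp_of_deriv_nonneg hg hgg'
          fun x hx => (hg'pos x (hIoo hx)).le).symm
    _ = ∫ _ in a..b, (1 : ℝ) := integral_congr fun x hx => by
        simp only [smul_eq_mul, hθ hx, mul_inv_cancel₀ (hg'pos x hx).ne']
    _ = b - a := by simp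

theorem LeftInvOn.eq_add_integral_inv_deriv {g g' θ : ℝ → ℝ} {a b s : ℝ}
    (hg : ContinuousOn g (Icc a b)) (hgg' : ∀ x ∈ Ioo a b, HasDerivAt g (g' x) x)
    (hg'pos : ∀ x ∈ Icc a b, 0 < g' x) (hθ : LeftInvOn θ g (Icc a b)) (hs : s ∈ Icc a b) :
    θ (g s) = a + ∫ v in g a..g s, (g' (θ v))⁻¹ := by
  have hsub : [[a, s]] ⊆ Icc a b := by
    rw [uIcc_of_le hs.1]; exact Icc_subset_Icc_right hs.2
  rw [integral_inv_deriv_comp_of_leftInvOn (hg.mono hsub)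
    (fun x hx => hgg' x (Ioo_subset_Ioo (le_min le_rfl hs.1) (max_le (hs.1.trans hs.2) hs.2) hx))
    (fun x hx => hg'pos x (hsub hx)) (hθ.mono hsub), hθ ⟨hs.1, hs.2⟩]
  ring

theorem reverse_flow_time_change_general
    (t : ℝ) (ht : 0 < t)
    (y : ℝ)
    (X Y : ℝ → ℝ)
    (hXcont : ContinuousOn X (Icc 0 t)) (hYcont : ContinuousOn Y (Icc 0 t))
    (hYpos : ∀ s ∈ Icc (0 : ℝ) t, 0 < Y s)
    (hY : ∀ s ∈ Icc (0 : ℝ) t,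
      Y s = y + ∫ r in (0 : ℝ)..s, 2 * Y r / (X r ^ 2 + Y r ^ 2))
    : StrictMonoOn Y (Icc (0 : ℝ) t) ∧
      ContinuousOn (fun s => Y s ^ 2 - y ^ 2) (Icc (0 : ℝ) t) ∧
      StrictMonoOn (fun s => Y s ^ 2 - y ^ 2) (Icc (0 : ℝ) t) ∧
      BijOn (fun s => Y s ^ 2 - y ^ 2) (Icc (0 : ℝ) t) (Icc (0 : ℝ) (Y t ^ 2 - y ^ 2)) ∧
      ∀ θ : ℝ → ℝ, (∀ s ∈ Icc (0 : ℝ) t, θ (Y s ^ 2 - y ^ 2) = s) →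
        ∀ u ∈ Icc (0 : ℝ) (Y t ^ 2 - y ^ 2),
          θ u = 1 / 4 * ∫ v in (0 : ℝ)..u, (X (θ v) ^ 2 / (y ^ 2 + v) + 1) := by
  set v : ℝ → ℝ := fun x => 2 * Y x / (X x ^ 2 + Y x ^ 2)
  set g : ℝ → ℝ := fun s => Y s ^ 2 - y ^ 2
  have hg0 : g 0 = 0 := by simp [g, by simpa using hY 0 ⟨le_rfl, ht.le⟩]
  have hdenom : ∀ x ∈ Icc (0 : ℝ) t, 0 < X x ^ 2 + Y x ^ 2 := fun x hx => by
    have := hYpos x hx; positivity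
  have hvpos : ∀ x ∈ Icc (0 : ℝ) t, 0 < v x := fun x hx =>
    div_pos (mul_pos two_pos (hYpos x hx)) (hdenom x hx)
  have hg'pos : ∀ x ∈ Icc (0 : ℝ) t, 0 < 2 * Y x * v x := fun x hx =>
    mul_pos (mul_pos two_pos (hYpos x hx)) (hvpos x hx)
  have hYderiv : ∀ x ∈ Ioo (0 : ℝ) t, HasDerivAt Y (v x) x := fun x =>
    hasDerivAt_of_eq_add_integral
      (ContinuousOn.div (by fun_prop) (by fun_prop) fun x hx => (hdenom x hx).ne') hY
  have hgderiv : ∀ x ∈ Ioo (0 : ℝ) t, HasDerivAt g (2 * Y x * v x) x := fun x hx =>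
    (((hYderiv x hx).pow 2).sub_const (y ^ 2)).congr_deriv (by ring)
  have hgcont : ContinuousOn g (Icc 0 t) := (hYcont.pow 2).sub continuousOn_const
  have hgmono := strictMonoOn_Icc_of_hasDerivAt_pos hgcont hgderiv
    fun x hx => hg'pos x (Ioo_subset_Icc_self hx)
  have hbij := hgcont.bijOn_Icc_of_strictMonoOn ht.le hgmono
  rw [hg0] at hbij
  refine ⟨strictMonoOn_Icc_of_hasDerivAt_pos hYcont hYderiv
    (fun x hx => hvpos x (Ioo_subset_Icc_self hx)), hgcont, hgmono, hbij, fun θ hθ u hu => ?_⟩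
  obtain ⟨s, hs, rfl⟩ := hbij.surjOn hu
  rw [LeftInvOn.eq_add_integral_inv_deriv hgcont hgderiv hg'pos hθ hs, hg0, zero_add,
    ← intervalIntegral.integral_const_mul]
  refine integral_congr fun w hw => ?_
  rw [uIcc_of_le (hbij.mapsTo hs).1] at hw
  obtain ⟨r, hr, rfl⟩ := hbij.surjOn ⟨hw.1, hw.2.trans hu.2⟩
  have hYsq : y ^ 2 + g r = Y r ^ 2 := by ring
  have := hYpos r hr; have := hdenom r hr
  rw [hθ r hr, hYsq]
  simp only [v]
  field_simp
  norm_num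

/-- Time change for the reverse Loewner flow: `Y` is strictly increasing, `s ↦ Y(s)² − y²` is a
continuous strictly increasing bijection from `[0,t]` onto `[0, Y(t)² − y²]`, and its inverse `θ`
satisfies `θ(u) = (1/4)∫₀ᵘ (X(θ(v))²/(y² + v) + 1) dv`. -/
theorem reverse_flow_time_change
    (σ t : ℝ) (hσ0 : 0 < σ) (ht : 0 < t)
    (β : ℝ → ℝ) (hβcont : ContinuousOn β (Icc 0 t)) (hβ0 : β 0 = 0)
    (hβlip : ∀ r ∈ Icc (0 : ℝ) t, ∀ s ∈ Icc (0 : ℝ) t, |β s - β r| ≤ σ * Real.sqrt |s - r|)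
    (y : ℝ) (hy : 0 < y)
    (X Y : ℝ → ℝ)
    (hXcont : ContinuousOn X (Icc 0 t)) (hYcont : ContinuousOn Y (Icc 0 t))
    (hYpos : ∀ s ∈ Icc (0 : ℝ) t, 0 < Y s)
    (hX : ∀ s ∈ Icc (0 : ℝ) t,
      X s = β s - ∫ r in (0 : ℝ)..s, 2 * X r / (X r ^ 2 + Y r ^ 2))
    (hY : ∀ s ∈ Icc (0 : ℝ) t,
      Y s = y + ∫ r in (0 : ℝ)..s, 2 * Y r / (X r ^ 2 + Y r ^ 2))
    : StrictMonoOn Y (Icc (0 : ℝ) t) ∧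
      ContinuousOn (fun s => Y s ^ 2 - y ^ 2) (Icc (0 : ℝ) t) ∧
      StrictMonoOn (fun s => Y s ^ 2 - y ^ 2) (Icc (0 : ℝ) t) ∧
      BijOn (fun s => Y s ^ 2 - y ^ 2) (Icc (0 : ℝ) t) (Icc (0 : ℝ) (Y t ^ 2 - y ^ 2)) ∧
      ∀ θ : ℝ → ℝ, (∀ s ∈ Icc (0 : ℝ) t, θ (Y s ^ 2 - y ^ 2) = s) →
        ∀ u ∈ Icc (0 : ℝ) (Y t ^ 2 - y ^ 2),
          θ u = 1 / 4 * ∫ v in (0 : ℝ)..u, (X (θ v) ^ 2 / (y ^ 2 + v) + 1) :=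
  reverse_flow_time_change_general t ht y X Y hXcont hYcont hYpos hY
end

section
/- Assume the reverse Loewner flow setup, and suppose m > 0 is such that |X(s)| ≤ m·Y(s) for all s ∈ [0,t]. Then ∫₀ᵗ 2(X(r)² − Y(r)²)/(X(r)² + Y(r)²)² dr ≤ ((m² − 1)/(m² + 1))·log(Y(t)/y). -/
open Set MeasureTheory intervalIntegral Real

/-- Derivative estimate for the reverse Loewner flow: if `|X(s)| ≤ m·Y(s)` on `[0,t]`, then
`∫₀ᵗ 2(X² − Y²)/(X² + Y²)² dr ≤ ((m² − 1)/(m² + 1))·log(Y(t)/y)`. -/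
theorem reverse_flow_derivative_bound
    (σ t : ℝ) (hσ0 : 0 < σ) (ht : 0 < t)
    (β : ℝ → ℝ) (hβcont : ContinuousOn β (Icc 0 t)) (hβ0 : β 0 = 0)
    (hβlip : ∀ r ∈ Icc (0 : ℝ) t, ∀ s ∈ Icc (0 : ℝ) t, |β s - β r| ≤ σ * Real.sqrt |s - r|)
    (y : ℝ) (hy : 0 < y)
    (X Y : ℝ → ℝ)
    (hXcont : ContinuousOn X (Icc 0 t)) (hYcont : ContinuousOn Y (Icc 0 t))
    (hYpos : ∀ s ∈ Icc (0 : ℝ) t, 0 < Y s)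
    (hX : ∀ s ∈ Icc (0 : ℝ) t,
      X s = β s - ∫ r in (0 : ℝ)..s, 2 * X r / (X r ^ 2 + Y r ^ 2))
    (hY : ∀ s ∈ Icc (0 : ℝ) t,
      Y s = y + ∫ r in (0 : ℝ)..s, 2 * Y r / (X r ^ 2 + Y r ^ 2))
    (m : ℝ) (hm : 0 < m)
    (hcone : ∀ s ∈ Icc (0 : ℝ) t, |X s| ≤ m * Y s) :
    (∫ r in (0 : ℝ)..t, 2 * (X r ^ 2 - Y r ^ 2) / (X r ^ 2 + Y r ^ 2) ^ 2) ≤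
      (m ^ 2 - 1) / (m ^ 2 + 1) * Real.log (Y t / y) := by
  have htt : t ∈ Icc (0:ℝ) t := ⟨ht.le, le_rfl⟩
  have h0t : (0:ℝ) ∈ Icc (0:ℝ) t := ⟨le_rfl, ht.le⟩
  have hD : ∀ s ∈ Icc (0:ℝ) t, 0 < X s ^ 2 + Y s ^ 2 := by
    intro s hs
    have := hYpos s hs; positivity
  have hne : ∀ r ∈ Icc (0:ℝ) t, X r ^ 2 + Y r ^ 2 ≠ 0 := fun r hr => (hD r hr).ne'
  have hXY : ContinuousOn (fun r => X r ^ 2 + Y r ^ 2) (Icc 0 t) :=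
    (hXcont.pow 2).add (hYcont.pow 2)
  have hf1cont : ContinuousOn
      (fun r => 2 * (X r ^ 2 - Y r ^ 2) / (X r ^ 2 + Y r ^ 2) ^ 2) (Icc 0 t) := by
    apply ContinuousOn.div
    · exact continuousOn_const.mul ((hXcont.pow 2).sub (hYcont.pow 2))
    · exact hXY.pow 2
    · intro r hr; exact pow_ne_zero 2 (hne r hr)
  have hf2cont : ContinuousOn (fun r => 2 / (X r ^ 2 + Y r ^ 2)) (Icc 0 t) :=
    continuousOn_const.div hXY hne
  have hgcont : ContinuousOn (fun r => 2 * Y r / (X r ^ 2 + Y r ^ 2)) (Icc 0 t) :=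
    (continuousOn_const.mul hYcont).div hXY hne
  have hint1 : IntervalIntegrable
      (fun r => 2 * (X r ^ 2 - Y r ^ 2) / (X r ^ 2 + Y r ^ 2) ^ 2) volume 0 t :=
    hf1cont.intervalIntegrable_of_Icc ht.le
  have hint2 : IntervalIntegrable (fun r => 2 / (X r ^ 2 + Y r ^ 2)) volume 0 t :=
    hf2cont.intervalIntegrable_of_Icc ht.le
  -- Y is differentiable on the interior with derivative 2Y/(X²+Y²)
  have hG : ∀ x ∈ Ioo (0:ℝ) t, HasDerivAt Y (2 * Y x / (X x ^ 2 + Y x ^ 2)) x := by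
    intro x hx
    have hxI : Icc (0:ℝ) t ∈ nhds x := Icc_mem_nhds hx.1 hx.2
    have hg_int : IntervalIntegrable (fun r => 2 * Y r / (X r ^ 2 + Y r ^ 2)) volume 0 x :=
      (hgcont.mono (Icc_subset_Icc le_rfl hx.2.le)).intervalIntegrable_of_Icc hx.1.le
    have hcAt : ContinuousAt (fun r => 2 * Y r / (X r ^ 2 + Y r ^ 2)) x :=
      hgcont.continuousAt hxI
    have hmeas : StronglyMeasurableAtFilter
        (fun r => 2 * Y r / (X r ^ 2 + Y r ^ 2)) (nhds x) :=
      ⟨Icc 0 t, hxI, hgcont.aestronglyMeasurable measurableSet_Icc⟩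
    have hGd := intervalIntegral.integral_hasDerivAt_right hg_int hmeas hcAt
    have hGd' : HasDerivAt
        (fun u => y + ∫ r in (0:ℝ)..u, 2 * Y r / (X r ^ 2 + Y r ^ 2))
        (2 * Y x / (X x ^ 2 + Y x ^ 2)) x := hGd.const_add y
    refine hGd'.congr_of_eventuallyEq ?_
    filter_upwards [hxI] with u hu
    exact hY u hu
  have hY0 : Y 0 = y := by
    have := hY 0 h0t
    simpa using this
  have hlog : (∫ r in (0:ℝ)..t, 2 / (X r ^ 2 + Y r ^ 2)) = Real.log (Y t) - Real.log y := by
    have hder : ∀ x ∈ Ioo (0:ℝ) t,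
        HasDerivAt (fun s => Real.log (Y s)) (2 / (X x ^ 2 + Y x ^ 2)) x := by
      intro x hx
      have hxIcc : x ∈ Icc (0:ℝ) t := ⟨hx.1.le, hx.2.le⟩
      have hYne : Y x ≠ 0 := (hYpos x hxIcc).ne'
      have hd := (hG x hx).log hYne
      have : 2 * Y x / (X x ^ 2 + Y x ^ 2) / Y x = 2 / (X x ^ 2 + Y x ^ 2) := by
        field_simp
      rwa [this] at hd
    have hcontlog : ContinuousOn (fun s => Real.log (Y s)) (Icc 0 t) :=
      hYcont.log (fun s hs => (hYpos s hs).ne')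
    have := intervalIntegral.integral_eq_sub_of_hasDerivAt_of_le ht.le hcontlog hder hint2
    rw [this, hY0]
  set c : ℝ := (m ^ 2 - 1) / (m ^ 2 + 1) with hc
  have hmono : (∫ r in (0:ℝ)..t, 2 * (X r ^ 2 - Y r ^ 2) / (X r ^ 2 + Y r ^ 2) ^ 2)
      ≤ ∫ r in (0:ℝ)..t, c * (2 / (X r ^ 2 + Y r ^ 2)) := by
    apply intervalIntegral.integral_mono_on ht.le hint1 (hint2.const_mul c)
    intro x hx
    have hD' := hD x hx
    have hYx := hYpos x hx
    have hsq : X x ^ 2 ≤ m ^ 2 * Y x ^ 2 := by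
      have h := hcone x hx
      have h2 := mul_self_le_mul_self (abs_nonneg (X x)) h
      nlinarith [sq_abs (X x)]
    have hm1 : (0:ℝ) < m ^ 2 + 1 := by positivity
    rw [hc, div_mul_div_comm, div_le_div_iff₀ (by positivity) (by positivity)]
    nlinarith [mul_nonneg hD'.le (sub_nonneg.2 hsq)]
  calc (∫ r in (0:ℝ)..t, 2 * (X r ^ 2 - Y r ^ 2) / (X r ^ 2 + Y r ^ 2) ^ 2)
      ≤ ∫ r in (0:ℝ)..t, c * (2 / (X r ^ 2 + Y r ^ 2)) := hmono
    _ = c * ∫ r in (0:ℝ)..t, 2 / (X r ^ 2 + Y r ^ 2) :=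
        intervalIntegral.integral_const_mul c _
    _ = c * Real.log (Y t / y) := by
        rw [hlog, Real.log_div (hYpos t htt).ne' hy.ne']
end

section
/- Let γ : [0,1] → ℂ be continuous and not constant on any nondegenerate subinterval of [0,1]. Suppose there exist A > 0 and r ≥ 1 such that for every δ ∈ (0,1] there exist a natural number N ≤ A·δ^{−r} and points 0 = t₀ ≤ t₁ ≤ … ≤ t_N = 1 with diam(γ([t_{j−1}, t_j])) ≤ δ for every j ∈ {1,…,N}. Then for every r' > r there exist an increasing homeomorphism τ : [0,1] → [0,1] and a constant C < ∞ such that |γ(τ⁻¹(u)) − γ(τ⁻¹(v))| ≤ C·|u − v|^{1/r'} for all u, v ∈ [0,1]. -/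
/-!
At the scale `2⁻¹ ^ (n + 1)` the covering gives a partition into `N n ≤ A · 2 ^ ((n + 1) r)`
pieces; let `φ n` be the continuous monotone map rising by `1 / N n` across each nondegenerate
piece. If `‖γ s - γ u‖ > 2⁻¹ ^ n`, the triangle inequality forces `[s, u]` to contain a whole
nondegenerate piece, so `φ n u - φ n s ≥ 1 / N n`. Summing the `φ n` with weights
`2 ^ (-n (r' - r))` and adding the identity yields an increasing homeomorphism `τ` with
`τ u - τ s ≳ 2 ^ (-n r')` whenever `‖γ s - γ u‖ > 2⁻¹ ^ n`, which is the Hölder bound with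
exponent `1 / r'`.
-/

open Set Metric

section Chains

variable {α : Type*}

theorem chain_le [Preorder α] {p : ℕ → α} {N : ℕ} (hp : ∀ j < N, p j ≤ p (j + 1)) {a b : ℕ}
    (hab : a ≤ b) (hb : b ≤ N) : p a ≤ p b := by
  induction b, hab using Nat.le_induction with
  | base => exact le_rfl
  | succ b _ ih => exact (ih (by omega)).trans (hp b (by omega))

theorem Nat.exists_lt_and_not_succ (P : ℕ → Prop) {N : ℕ} (h0 : P 0) (hN : ¬P N) :
    ∃ i < N, P i ∧ ¬P (i + 1) := by
  induction N with
  | zero => exact absurd h0 hN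
  | succ N ih =>
    by_cases hPN : P N
    · exact ⟨N, by omega, hPN, hN⟩
    · obtain ⟨i, hi, h⟩ := ih hPN
      exact ⟨i, by omega, h⟩

theorem exists_lt_succ_of_lt [LinearOrder α] {p : ℕ → α} {a b : ℕ} (hab : a ≤ b)
    (h : p a < p b) : ∃ m, a ≤ m ∧ m < b ∧ p m < p (m + 1) := by
  induction b, hab using Nat.le_induction with
  | base => exact absurd h (lt_irrefl _)
  | succ b hab ih =>
    by_cases hb : p b < p (b + 1)
    · exact ⟨b, hab, by omega, hb⟩
    · obtain ⟨m, h1, h2, h3⟩ := ih (h.trans_le (not_lt.mp hb))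
      exact ⟨m, h1, by omega, h3⟩

end Chains

theorem exists_piece_between_of_two_mul_lt_dist {X : Type*} [PseudoMetricSpace X]
    {f : ℝ → X} {p : ℕ → ℝ} {N : ℕ} {δ s u : ℝ} (hδ : 0 ≤ δ)
    (hp : ∀ j < N, p j ≤ p (j + 1))
    (hf : ∀ j < N, ∀ x ∈ Icc (p j) (p (j + 1)), ∀ y ∈ Icc (p j) (p (j + 1)),
      dist (f x) (f y) ≤ δ)
    (hs : p 0 ≤ s) (hsu : s ≤ u) (hu : u ≤ p N) (hd : 2 * δ < dist (f s) (f u)) :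
    ∃ m < N, s ≤ p m ∧ p m < p (m + 1) ∧ p (m + 1) ≤ u := by
  have hsu' : s < u := hsu.lt_of_ne (by rintro rfl; simp at hd; linarith)
  obtain ⟨i, hiN, his, hsi⟩ :=
    Nat.exists_lt_and_not_succ (fun j => p j ≤ s) hs (by simp only [not_le]; linarith)
  obtain ⟨k, hkN, hku, huk⟩ :=
    Nat.exists_lt_and_not_succ (fun j => p j < u) (hs.trans_lt hsu') (not_lt.mpr hu)
  simp only [not_le, not_lt] at his hsi hku huk
  -- `s` lies in the piece `i` and `u` in the piece `k`.
  rcases le_or_gt k i with hki | hik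
  · have hui : u ≤ p (i + 1) := huk.trans (chain_le hp (by omega) (by omega))
    have := hf i hiN s ⟨his, hsi.le⟩ u ⟨his.trans hsu, hui⟩
    linarith
  rcases (chain_le hp (show i + 1 ≤ k by omega) hkN.le).lt_or_eq with hlt | heq
  · obtain ⟨m, him, hmk, hm⟩ := exists_lt_succ_of_lt (show i + 1 ≤ k by omega) hlt
    exact ⟨m, by omega, hsi.le.trans (chain_le hp him (by omega)), hm,
      (chain_le hp hmk hkN.le).trans hku.le⟩
  · have h1 := hf i hiN s ⟨his, hsi.le⟩ (p (i + 1)) ⟨hp i hiN, le_rfl⟩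
    have h2 := hf k hkN (p k) ⟨le_rfl, hp k hkN⟩ u ⟨hku.le, huk⟩
    rw [← heq] at h2
    linarith [dist_triangle (f s) (f (p (i + 1))) (f u)]

theorem dist_le_of_diam_image_piece_le {X : Type*} [PseudoMetricSpace X] {f : ℝ → X}
    {p : ℕ → ℝ} {N : ℕ} {δ : ℝ} (hf : ContinuousOn f (Icc (p 0) (p N)))
    (hp : ∀ j < N, p j ≤ p (j + 1)) (hdiam : ∀ j < N, diam (f '' Icc (p j) (p (j + 1))) ≤ δ) :
    ∀ j < N, ∀ x ∈ Icc (p j) (p (j + 1)), ∀ y ∈ Icc (p j) (p (j + 1)),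
      dist (f x) (f y) ≤ δ := by
  intro j hj x hx y hy
  have hsub : Icc (p j) (p (j + 1)) ⊆ Icc (p 0) (p N) :=
    Icc_subset_Icc (chain_le hp j.zero_le hj.le) (chain_le hp hj le_rfl)
  exact (dist_le_diam_of_mem (isCompact_Icc.image_of_continuousOn (hf.mono hsub)).isBounded
    (mem_image_of_mem f hx) (mem_image_of_mem f hy)).trans (hdiam j hj)

noncomputable def ramp (a b t : ℝ) : ℝ := projIcc 0 1 zero_le_one ((t - a) / (b - a))

section Ramp

variable {a b t : ℝ}

theorem ramp_mem_Icc : ramp a b t ∈ Icc 0 1 := Subtype.prop _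

theorem continuous_ramp : Continuous (ramp a b) := by
  unfold ramp
  fun_prop

theorem monotone_ramp (h : a ≤ b) : Monotone (ramp a b) := fun _ _ hst =>
  monotone_projIcc _ (div_le_div_of_nonneg_right (sub_le_sub_right hst a) (sub_nonneg.mpr h))

theorem ramp_eq_zero (h : a < b) (ht : t ≤ a) : ramp a b t = 0 := by
  rw [ramp, projIcc_of_le_left _ (div_nonpos_of_nonpos_of_nonneg (by linarith) (by linarith))]

theorem ramp_eq_one (h : a < b) (ht : b ≤ t) : ramp a b t = 1 := by
  rw [ramp, projIcc_of_right_le _ ((one_le_div (by linarith)).mpr (by linarith))]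

end Ramp

noncomputable def partitionRamp (p : ℕ → ℝ) (N : ℕ) (t : ℝ) : ℝ :=
  (∑ j ∈ Finset.range N, ramp (p j) (p (j + 1)) t) / N

section PartitionRamp

variable {p : ℕ → ℝ} {N : ℕ}

theorem partitionRamp_mem_Icc (t : ℝ) : partitionRamp p N t ∈ Icc 0 1 := by
  unfold partitionRamp
  rcases N.eq_zero_or_pos with rfl | hN
  · simp
  have hsum : ∑ j ∈ Finset.range N, ramp (p j) (p (j + 1)) t ≤ N := by
    simpa using Finset.sum_le_sum fun j (_ : j ∈ Finset.range N) => ramp_mem_Icc.2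
  exact ⟨div_nonneg (Finset.sum_nonneg fun j _ => ramp_mem_Icc.1) N.cast_nonneg,
    div_le_one_of_le₀ hsum N.cast_nonneg⟩

theorem continuous_partitionRamp : Continuous (partitionRamp p N) :=
  (continuous_finsetSum _ fun _ _ => continuous_ramp).div_const _

theorem monotone_partitionRamp (hp : ∀ j < N, p j ≤ p (j + 1)) :
    Monotone (partitionRamp p N) := fun _ _ hst =>
  div_le_div_of_nonneg_right
    (Finset.sum_le_sum fun j hj => monotone_ramp (hp j (Finset.mem_range.mp hj)) hst)
    N.cast_nonneg

theorem inv_le_partitionRamp_sub (hp : ∀ j < N, p j ≤ p (j + 1)) {m : ℕ} {s u : ℝ}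
    (hm : m < N) (hs : s ≤ p m) (hstep : p m < p (m + 1)) (hu : p (m + 1) ≤ u) :
    (N : ℝ)⁻¹ ≤ partitionRamp p N u - partitionRamp p N s := by
  have hsu : s ≤ u := hs.trans (hstep.le.trans hu)
  unfold partitionRamp
  rw [← sub_div, ← Finset.sum_sub_distrib, inv_eq_one_div]
  gcongr
  calc (1 : ℝ) = ramp (p m) (p (m + 1)) u - ramp (p m) (p (m + 1)) s := by
        rw [ramp_eq_one hstep hu, ramp_eq_zero hstep hs, sub_zero]
    _ ≤ _ := Finset.single_le_sum
        (f := fun j => ramp (p j) (p (j + 1)) u - ramp (p j) (p (j + 1)) s)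
        (fun j hj => sub_nonneg.mpr (monotone_ramp (hp j (Finset.mem_range.mp hj)) hsu))
        (Finset.mem_range.mpr hm)

end PartitionRamp

theorem inv_le_partitionRamp_sub_of_two_mul_lt_dist {X : Type*} [PseudoMetricSpace X]
    {f : ℝ → X} {p : ℕ → ℝ} {N : ℕ} {δ s u : ℝ} (hδ : 0 ≤ δ)
    (hp : ∀ j < N, p j ≤ p (j + 1))
    (hf : ∀ j < N, ∀ x ∈ Icc (p j) (p (j + 1)), ∀ y ∈ Icc (p j) (p (j + 1)),
      dist (f x) (f y) ≤ δ)
    (hs : p 0 ≤ s) (hsu : s ≤ u) (hu : u ≤ p N) (hd : 2 * δ < dist (f s) (f u)) :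
    (N : ℝ)⁻¹ ≤ partitionRamp p N u - partitionRamp p N s := by
  obtain ⟨m, hm, hsm, hstep, hmu⟩ := exists_piece_between_of_two_mul_lt_dist hδ hp hf hs hsu hu hd
  exact inv_le_partitionRamp_sub hp hm hsm hstep hmu

section WeightedSum

variable {φ : ℕ → ℝ → ℝ} {c : ℕ → ℝ}

theorem summable_mul_of_mem_Icc (hc : Summable c) (hc0 : ∀ n, 0 ≤ c n)
    (hφ : ∀ n t, φ n t ∈ Icc (0 : ℝ) 1) (t : ℝ) : Summable fun n => c n * φ n t :=
  hc.of_nonneg_of_le (fun n => mul_nonneg (hc0 n) (hφ n t).1)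
    fun n => mul_le_of_le_one_right (hc0 n) (hφ n t).2

theorem continuous_tsum_mul (hc : Summable c) (hc0 : ∀ n, 0 ≤ c n)
    (hφ : ∀ n t, φ n t ∈ Icc (0 : ℝ) 1) (hcont : ∀ n, Continuous (φ n)) :
    Continuous fun t => ∑' n, c n * φ n t :=
  continuous_tsum (fun n => continuous_const.mul (hcont n)) hc fun n t => by
    rw [norm_mul, Real.norm_of_nonneg (hc0 n), Real.norm_of_nonneg (hφ n t).1]
    exact mul_le_of_le_one_right (hc0 n) (hφ n t).2

theorem mul_sub_le_tsum_mul_sub (hc : Summable c) (hc0 : ∀ n, 0 ≤ c n)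
    (hφ : ∀ n t, φ n t ∈ Icc (0 : ℝ) 1) (hmono : ∀ n, Monotone (φ n)) ⦃s t : ℝ⦄ (hst : s ≤ t)
    (n : ℕ) : c n * (φ n t - φ n s) ≤ ∑' k, c k * φ k t - ∑' k, c k * φ k s := by
  have hsum := summable_mul_of_mem_Icc hc hc0 hφ
  rw [← (hsum t).tsum_sub (hsum s), mul_sub]
  exact ((hsum t).sub (hsum s)).le_tsum n fun k _ => by
    rw [← mul_sub]
    exact mul_nonneg (hc0 k) (sub_nonneg.mpr (hmono k hst))

theorem exists_normalization_of_monotone {g : ℝ → ℝ} (hg : Continuous g) (hgm : Monotone g) :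
    ∃ τ : ℝ → ℝ, ∃ L > 0, Continuous τ ∧ StrictMono τ ∧ τ 0 = 0 ∧ τ 1 = 1 ∧
      ∀ s t, s ≤ t → g t - g s ≤ L * (τ t - τ s) := by
  have hL : 0 < 1 + g 1 - g 0 := by linarith [hgm zero_le_one]
  refine ⟨fun t => (t + g t - g 0) / (1 + g 1 - g 0), 1 + g 1 - g 0, hL, by fun_prop,
    fun s t hst => div_lt_div_of_pos_right (by linarith [hgm hst.le]) hL, by simp,
    div_self hL.ne', fun s t hst => ?_⟩
  rw [← sub_div, mul_div_cancel₀ _ hL.ne']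
  linarith

theorem exists_reparametrization_of_weighted_sum (hc : Summable c) (hc0 : ∀ n, 0 ≤ c n)
    (hφ : ∀ n t, φ n t ∈ Icc (0 : ℝ) 1) (hcont : ∀ n, Continuous (φ n))
    (hmono : ∀ n, Monotone (φ n)) :
    ∃ τ : ℝ → ℝ, ∃ L > 0, Continuous τ ∧ StrictMono τ ∧ τ 0 = 0 ∧ τ 1 = 1 ∧
      ∀ n s t, s ≤ t → c n * (φ n t - φ n s) ≤ L * (τ t - τ s) := by
  have hgap := mul_sub_le_tsum_mul_sub hc hc0 hφ hmono
  have hgm : Monotone fun t => ∑' n, c n * φ n t := fun s t hst =>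
    sub_nonneg.mp ((mul_nonneg (hc0 0) (sub_nonneg.mpr (hmono 0 hst))).trans (hgap hst 0))
  obtain ⟨τ, L, hL, hτc, hτm, hτ0, hτ1, hτ⟩ :=
    exists_normalization_of_monotone (continuous_tsum_mul hc hc0 hφ hcont) hgm
  exact ⟨τ, L, hL, hτc, hτm, hτ0, hτ1, fun n s t hst => (hgap hst n).trans (hτ s t hst)⟩

end WeightedSum

theorem le_mul_rpow_of_forall_pow_lt {d D Δ K r' : ℝ} (hr' : 0 < r') (hK : 0 < K)
    (hΔ : 0 ≤ Δ) (hdD : d ≤ D)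
    (hgap : ∀ n : ℕ, (2⁻¹ : ℝ) ^ n < d → K * ((2⁻¹ : ℝ) ^ n) ^ r' ≤ Δ) :
    d ≤ max D 2 / K ^ (1 / r') * Δ ^ (1 / r') := by
  have hscale : ∀ n, (2⁻¹ : ℝ) ^ n < d → (2⁻¹ : ℝ) ^ n ≤ (Δ / K) ^ (1 / r') := fun n hn => by
    have hpow : ((2⁻¹ : ℝ) ^ n) ^ r' ≤ Δ / K := by
      rw [le_div_iff₀ hK, mul_comm]
      exact hgap n hn
    calc (2⁻¹ : ℝ) ^ n = (((2⁻¹ : ℝ) ^ n) ^ r') ^ (1 / r') := by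
          rw [← Real.rpow_mul (by positivity), mul_one_div_cancel hr'.ne', Real.rpow_one]
      _ ≤ (Δ / K) ^ (1 / r') := Real.rpow_le_rpow (by positivity) hpow (by positivity)
  have hmax : 2 ≤ max D 2 := le_max_right D 2
  rw [div_mul_eq_mul_div, mul_div_assoc, ← Real.div_rpow hΔ hK.le]
  rcases le_or_gt d 0 with hd | hd
  · exact hd.trans (mul_nonneg (by linarith) (by positivity))
  rcases le_or_gt d 1 with hd1 | hd1
  · obtain ⟨n, hn, hn'⟩ := exists_nat_pow_near_of_lt_one hd hd1 (by norm_num : (0 : ℝ) < 2⁻¹)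
      (by norm_num)
    calc d ≤ 2 * (2⁻¹ : ℝ) ^ (n + 1) := by rw [pow_succ]; linarith
      _ ≤ max D 2 * (Δ / K) ^ (1 / r') :=
        mul_le_mul hmax (hscale _ hn) (by positivity) (by linarith)
  · have h1 : 1 ≤ (Δ / K) ^ (1 / r') := by simpa using hscale 0 (by simpa using hd1)
    calc d ≤ max D 2 := hdD.trans (le_max_left D 2)
      _ ≤ max D 2 * (Δ / K) ^ (1 / r') := le_mul_of_one_le_right (by linarith) h1

theorem inv_mul_rpow_le_of_rpow_sub_mul_inv_le {x A N L r r' Δ : ℝ} (hx : 0 < x) (hA : 0 < A)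
    (hN : 0 < N) (hL : 0 < L) (hNA : N ≤ A * (x / 2) ^ (-r))
    (hΔ : x ^ (r' - r) * N⁻¹ ≤ L * Δ) : (A * 2 ^ r * L)⁻¹ * x ^ r' ≤ Δ := by
  have hNA' : x ^ r' * N ≤ x ^ (r' - r) * (A * 2 ^ r) :=
    calc x ^ r' * N ≤ x ^ r' * (A * (x / 2) ^ (-r)) := by gcongr
      _ = x ^ (r' - r) * (A * 2 ^ r) := by
        rw [Real.div_rpow hx.le zero_le_two, Real.rpow_neg hx.le, Real.rpow_neg zero_le_two,
          Real.rpow_sub hx]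
        field_simp
  calc (A * 2 ^ r * L)⁻¹ * x ^ r' = x ^ r' / (A * 2 ^ r) / L := by field_simp
    _ ≤ x ^ (r' - r) * N⁻¹ / L := by
      rw [← div_eq_mul_inv]
      gcongr ?_ / L
      rwa [div_le_div_iff₀ (by positivity) hN]
    _ ≤ Δ := (div_le_iff₀' hL).mpr hΔ

theorem holder_reparametrization_of_segment_covering_general
    (γ : ℝ → ℂ) (hγ : ContinuousOn γ (Icc (0 : ℝ) 1))
    (A r : ℝ) (hA : 0 < A) (hr : 1 ≤ r)
    (hcov : ∀ δ : ℝ, δ ∈ Ioc (0 : ℝ) 1 → ∃ N : ℕ, (N : ℝ) ≤ A * δ ^ (-r) ∧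
      ∃ pts : ℕ → ℝ, pts 0 = 0 ∧ pts N = 1 ∧
        (∀ j < N, pts j ≤ pts (j + 1)) ∧
        ∀ j < N, Metric.diam (γ '' Icc (pts j) (pts (j + 1))) ≤ δ) :
    ∀ r' : ℝ, r < r' →
      ∃ τ : ℝ → ℝ, ∃ C : ℝ,
        ContinuousOn τ (Icc (0 : ℝ) 1) ∧ StrictMonoOn τ (Icc (0 : ℝ) 1) ∧
        τ 0 = 0 ∧ τ 1 = 1 ∧
        ∀ s ∈ Icc (0 : ℝ) 1, ∀ u ∈ Icc (0 : ℝ) 1,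
          ‖γ s - γ u‖ ≤ C * |τ s - τ u| ^ (1 / r') := by
  intro r' hr'
  choose N hN pts hp0 hpN hp hdiam using fun n : ℕ =>
    hcov ((2⁻¹ : ℝ) ^ (n + 1)) ⟨by positivity, pow_le_one₀ (by norm_num) (by norm_num)⟩
  have hNpos (n : ℕ) : (0 : ℝ) < N n :=
    Nat.cast_pos.mpr (Nat.pos_of_ne_zero fun h => by simpa [h, hp0 n] using hpN n)
  have hpiece (n : ℕ) := dist_le_of_diam_image_piece_le (by rwa [hp0 n, hpN n]) (hp n) (hdiam n)
  have hθ : (2⁻¹ : ℝ) ^ (r' - r) < 1 := Real.rpow_lt_one (by norm_num) (by norm_num) (by linarith)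
  obtain ⟨τ, L, hL, hτc, hτm, hτ0, hτ1, hτgap⟩ := exists_reparametrization_of_weighted_sum
    (summable_geometric_of_lt_one (by positivity) hθ) (fun n => by positivity)
    (fun n => partitionRamp_mem_Icc) (fun n => continuous_partitionRamp)
    (fun n => monotone_partitionRamp (hp n))
  have hbdd := (isCompact_Icc.image_of_continuousOn hγ).isBounded
  refine ⟨τ, max (diam (γ '' Icc 0 1)) 2 / (A * 2 ^ r * L)⁻¹ ^ (1 / r'), hτc.continuousOn,
    hτm.strictMonoOn _, hτ0, hτ1, fun s hs u hu => ?_⟩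
  wlog hsu : s ≤ u generalizing s u
  · simpa [norm_sub_rev, abs_sub_comm] using this u hu s hs (le_of_not_ge hsu)
  have hτsu : 0 ≤ τ u - τ s := sub_nonneg.mpr (hτm.monotone hsu)
  rw [abs_sub_comm, abs_of_nonneg hτsu, ← dist_eq_norm]
  refine le_mul_rpow_of_forall_pow_lt (by linarith) (by positivity) hτsu
    (dist_le_diam_of_mem hbdd (mem_image_of_mem γ hs) (mem_image_of_mem γ hu)) fun n hn => ?_
  have hramp := inv_le_partitionRamp_sub_of_two_mul_lt_dist (by positivity) (hp n) (hpiece n)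
    (by rw [hp0 n]; exact hs.1) hsu (by rw [hpN n]; exact hu.2)
    (by convert hn using 1; ring)
  refine inv_mul_rpow_le_of_rpow_sub_mul_inv_le (by positivity) hA (hNpos n) hL
    (by convert hN n using 3; ring) ?_
  rw [← Real.rpow_pow_comm (by norm_num)]
  exact (mul_le_mul_of_nonneg_left hramp (by positivity)).trans (hτgap n s u hsu)

/-- If a nondegenerate curve `γ` can, for every `δ ∈ (0,1]`, be split into at most `A·δ^{−r}`
consecutive segments of diameter at most `δ`, then for every `r' > r` it admits an increasing
reparametrization that is Hölder continuous with exponent `1/r'`. -/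
theorem holder_reparametrization_of_segment_covering
    (γ : ℝ → ℂ) (hγ : ContinuousOn γ (Icc (0 : ℝ) 1))
    (hnc : ∀ a b : ℝ, 0 ≤ a → a < b → b ≤ 1 → ∃ s ∈ Icc a b, γ s ≠ γ a)
    (A r : ℝ) (hA : 0 < A) (hr : 1 ≤ r)
    (hcov : ∀ δ : ℝ, δ ∈ Ioc (0 : ℝ) 1 → ∃ N : ℕ, (N : ℝ) ≤ A * δ ^ (-r) ∧
      ∃ pts : ℕ → ℝ, pts 0 = 0 ∧ pts N = 1 ∧
        (∀ j < N, pts j ≤ pts (j + 1)) ∧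
        ∀ j < N, Metric.diam (γ '' Icc (pts j) (pts (j + 1))) ≤ δ) :
    ∀ r' : ℝ, r < r' →
      ∃ τ : ℝ → ℝ, ∃ C : ℝ,
        ContinuousOn τ (Icc (0 : ℝ) 1) ∧ StrictMonoOn τ (Icc (0 : ℝ) 1) ∧
        τ 0 = 0 ∧ τ 1 = 1 ∧
        ∀ s ∈ Icc (0 : ℝ) 1, ∀ u ∈ Icc (0 : ℝ) 1,
          ‖γ s - γ u‖ ≤ C * |τ s - τ u| ^ (1 / r') :=
  holder_reparametrization_of_segment_covering_general γ hγ A r hA hr hcov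
end
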